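/- arXiv:2012.13642 — 8 statements merged into one kernel-verified Lean document; each statement's English description precedes it below -/
import Mathlib

section
/- Let F be a finite field of odd characteristic, let n, d ≥ 1, let a, b, c ∈ F, and let G ∈ F^{n×n} be a symmetric matrix. Then the following are equivalent: (1) there exist a symmetric invertible matrix M ∈ F^{d×d} and a matrix Φ ∈ F^{d×n} with rank Φ = d such that Φᵀ·M·Φ = G, Φ·Φᵀ·M = c·I_d, G_{ii} = a for every i, and (G_{ij})² = b for every i ≠ j (i.e., G is the Gram matrix of an (a,b,c)-equiangular tight frame of n vectors in a d-dimensional orthogonal geometry over F); (2) G_{ii} = a for every i, (G_{ij})² = b for every i ≠ j, G² = c·G, and rank G = d. -/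
open Matrix

/-- A matrix with full row rank has a right inverse. -/
lemma aux_exists_right_inv {F : Type} [Field F] {d n : ℕ}
    (Φ : Matrix (Fin d) (Fin n) F) (h : Φ.rank = d) :
    ∃ Ψ : Matrix (Fin n) (Fin d) F, Φ * Ψ = 1 := by
  have hsurj : Function.Surjective Φ.mulVecLin := by
    rw [← LinearMap.range_eq_top]
    apply Submodule.eq_top_of_finrank_eq
    rw [Module.finrank_fin_fun]
    exact h
  obtain ⟨g, hg⟩ := Φ.mulVecLin.exists_rightInverse_of_surjective
    (LinearMap.range_eq_top.2 hsurj)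
  refine ⟨LinearMap.toMatrix' g, ?_⟩
  apply Matrix.toLin'.injective
  rw [Matrix.toLin'_mul, Matrix.toLin'_toMatrix', Matrix.toLin'_one, Matrix.toLin'_apply', hg]

/-- A symmetric matrix of rank `d` over a field of odd characteristic can be factored
as `Φᵀ * M * Φ` with `M` symmetric invertible `d × d` and `Φ` having a right inverse. -/
lemma aux_factor {F : Type} [Field F] (hchar : ringChar F ≠ 2) {n d : ℕ}
    (G : Matrix (Fin n) (Fin n) F) (hG : G.IsSymm) (hrank : G.rank = d) :
    ∃ (M : Matrix (Fin d) (Fin d) F) (Φ : Matrix (Fin d) (Fin n) F)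
      (Ψ : Matrix (Fin n) (Fin d) F),
      M.IsSymm ∧ IsUnit M ∧ Φ * Ψ = 1 ∧ Φᵀ * M * Φ = G := by
  classical
  haveI : Invertible (2 : F) := invertibleOfNonzero (Ring.two_ne_zero hchar)
  set B := Matrix.toBilin' G with hB
  have hBsymm : B.IsSymm := by
    refine ⟨fun x y => ?_⟩
    simp only [RingHom.id_apply, hB, Matrix.toBilin'_apply]
    rw [Finset.sum_comm]
    refine Finset.sum_congr rfl fun i _ => Finset.sum_congr rfl fun j _ => ?_
    rw [← hG.apply i j]
    ring
  obtain ⟨v0, hv0⟩ := LinearMap.BilinForm.exists_orthogonal_basis (LinearMap.BilinForm.isSymm_iff.1 hBsymm)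
  let v : Module.Basis (Fin n) F (Fin n → F) := v0.reindex (finCongr (Module.finrank_fin_fun F))
  have hv : ∀ i j, i ≠ j → B (v i) (v j) = 0 := by
    intro i j hij
    have hne : (finCongr (Module.finrank_fin_fun F)).symm i
        ≠ (finCongr (Module.finrank_fin_fun F)).symm j :=
      fun h => hij (by simpa using congrArg (finCongr (Module.finrank_fin_fun F)) h)
    simpa [v, Module.Basis.coe_reindex] using hv0 hne
  set P : Matrix (Fin n) (Fin n) F := (Pi.basisFun F (Fin n)).toMatrix ⇑v with hPdef
  have hPentry : ∀ i j, P i j = v j i := by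
    intro i j
    simp [hPdef, Module.Basis.toMatrix_apply]
  haveI instInv : Invertible P := (Pi.basisFun F (Fin n)).invertibleToMatrix v
  set Q : Matrix (Fin n) (Fin n) F := ⅟P with hQdef
  have hQP : Q * P = 1 := invOf_mul_self P
  have hPQ : P * Q = 1 := mul_invOf_self P
  set D : Matrix (Fin n) (Fin n) F := Pᵀ * G * P with hDdef
  have hDB : ∀ i j, D i j = B (v i) (v j) := by
    intro i j
    simp only [hDdef, Matrix.mul_apply, Matrix.transpose_apply, hB, Matrix.toBilin'_apply,
      Finset.sum_mul, hPentry]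
    conv_lhs => rw [Finset.sum_comm]
  set w : Fin n → F := fun i => D i i with hwdef
  have hDdiag : D = Matrix.diagonal w := by
    ext i j
    by_cases h : i = j
    · subst h; simp [Matrix.diagonal_apply_eq, hwdef]
    · rw [Matrix.diagonal_apply_ne _ h, hDB, hv i j h]
  have hPu : IsUnit P.det := (Matrix.isUnit_iff_isUnit_det P).1 (isUnit_of_invertible P)
  have hrankD : D.rank = d := by
    rw [hDdef, Matrix.rank_mul_eq_left_of_isUnit_det P _ hPu,
      Matrix.rank_mul_eq_right_of_isUnit_det Pᵀ G (by rwa [Matrix.det_transpose]), hrank]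
  have hcard : Fintype.card {i // w i ≠ 0} = d := by
    rw [← Matrix.rank_diagonal w, ← hDdiag, hrankD]
  let e : Fin d ≃ {i // w i ≠ 0} := (Fintype.equivFinOfCardEq hcard).symm
  let g : Fin d → Fin n := fun k => (e k : Fin n)
  have hginj : Function.Injective g := fun k k' h =>
    e.injective (Subtype.ext h)
  refine ⟨Matrix.diagonal (w ∘ g), Q.submatrix g id, P.submatrix id g,
    Matrix.isSymm_diagonal _, ?_, ?_, ?_⟩
  · rw [Matrix.isUnit_iff_isUnit_det, Matrix.det_diagonal]
    rw [isUnit_iff_ne_zero, Finset.prod_ne_zero_iff]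
    exact fun k _ => (e k).2
  · rw [← Matrix.submatrix_mul Q P g id g Function.bijective_id, hQP,
      Matrix.submatrix_one g hginj]
  · have key : (Q.submatrix g id)ᵀ * Matrix.diagonal (w ∘ g) * Q.submatrix g id
        = Qᵀ * D * Q := by
      ext i j
      have lhs_eq : ((Q.submatrix g id)ᵀ * Matrix.diagonal (w ∘ g) * Q.submatrix g id) i j
          = ∑ k : Fin d, Q (g k) i * (w (g k) * Q (g k) j) := by
        rw [Matrix.mul_assoc, Matrix.mul_apply]
        refine Finset.sum_congr rfl fun k _ => ?_
        rw [Matrix.diagonal_mul]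
        simp [Matrix.submatrix_apply, Matrix.transpose_apply]
      have rhs_eq : (Qᵀ * D * Q) i j = ∑ l : Fin n, Q l i * (w l * Q l j) := by
        rw [hDdiag, Matrix.mul_assoc, Matrix.mul_apply]
        refine Finset.sum_congr rfl fun l _ => ?_
        rw [Matrix.diagonal_mul]
        simp [Matrix.transpose_apply]
      rw [lhs_eq, rhs_eq]
      have h1 : ∑ l : Fin n, Q l i * (w l * Q l j)
          = ∑ l ∈ Finset.univ.filter (fun l => w l ≠ 0), Q l i * (w l * Q l j) := by
        refine (Finset.sum_filter_of_ne fun x _ hx => ?_).symm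
        intro hw; apply hx; rw [hw]; ring
      have h2 : ∑ l ∈ Finset.univ.filter (fun l => w l ≠ 0), Q l i * (w l * Q l j)
          = ∑ x : {l // w l ≠ 0}, Q x i * (w x * Q x j) := by
        refine Finset.sum_subtype _ (fun x => ?_) _
        simp
      rw [h1, h2, ← Equiv.sum_comp e (fun x : {l // w l ≠ 0} => Q x i * (w x * Q x j))]
    rw [key]
    calc Qᵀ * (Pᵀ * G * P) * Q = (P * Q)ᵀ * G * (P * Q) := by
          simp only [Matrix.transpose_mul, Matrix.mul_assoc]
        _ = G := by rw [hPQ]; simp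

/-- The Gram-matrix characterization of ETFs in finite orthogonal geometries:
a symmetric matrix `G` is the Gram matrix of an `(a,b,c)`-ETF of `n` vectors in a
`d`-dimensional orthogonal geometry over a finite field `F` of odd characteristic
iff `G` has constant diagonal `a`, off-diagonal entries squaring to `b`,
`G² = cG`, and `rank G = d`. -/
theorem stmt_0 (F : Type) [Field F] [Fintype F] (hchar : ringChar F ≠ 2)
    (n d : ℕ) (hn : 1 ≤ n) (hd : 1 ≤ d) (a b c : F)
    (G : Matrix (Fin n) (Fin n) F) (hG : G.IsSymm) :
    (∃ (M : Matrix (Fin d) (Fin d) F) (Φ : Matrix (Fin d) (Fin n) F),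
        M.IsSymm ∧ IsUnit M ∧ Φ.rank = d ∧
        Φᵀ * M * Φ = G ∧
        Φ * Φᵀ * M = c • (1 : Matrix (Fin d) (Fin d) F) ∧
        (∀ i, G i i = a) ∧ (∀ i j, i ≠ j → (G i j) ^ 2 = b)) ↔
    ((∀ i, G i i = a) ∧ (∀ i j, i ≠ j → (G i j) ^ 2 = b) ∧
      G * G = c • G ∧ G.rank = d) := by
  constructor
  · rintro ⟨M, Φ, hMsymm, hMunit, hΦ, hGram, hTight, hdiag, hoff⟩
    have hMdet : IsUnit M.det := (Matrix.isUnit_iff_isUnit_det M).1 hMunit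
    obtain ⟨Ψ, hΨ⟩ := aux_exists_right_inv Φ hΦ
    refine ⟨hdiag, hoff, ?_, ?_⟩
    · have h1 : G * G = Φᵀ * M * (Φ * Φᵀ * M) * Φ := by
        rw [← hGram]; simp only [Matrix.mul_assoc]
      rw [h1, hTight, Matrix.mul_smul, Matrix.smul_mul, Matrix.mul_one, hGram]
    · have h2 : Φᵀ = G * (Ψ * M⁻¹) := by
        rw [← hGram]
        have : Φᵀ * M * Φ * (Ψ * M⁻¹) = Φᵀ * (M * ((Φ * Ψ) * M⁻¹)) := by
          simp only [Matrix.mul_assoc]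
        rw [this, hΨ, Matrix.one_mul, Matrix.mul_nonsing_inv M hMdet, Matrix.mul_one]
      have hle1 : G.rank ≤ Φᵀ.rank := by
        rw [← hGram, Matrix.mul_assoc]; exact Matrix.rank_mul_le_left _ _
      have hle2 : Φᵀ.rank ≤ G.rank := by
        rw [h2]; exact Matrix.rank_mul_le_left _ _
      rw [le_antisymm hle1 hle2, Matrix.rank_transpose, hΦ]
  · rintro ⟨hdiag, hoff, hGG, hrank⟩
    obtain ⟨M, Φ, Ψ, hMsymm, hMunit, hΦΨ, hGram⟩ := aux_factor hchar G hG hrank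
    have hMdet : IsUnit M.det := (Matrix.isUnit_iff_isUnit_det M).1 hMunit
    have hT : Ψᵀ * Φᵀ = 1 := by
      rw [← Matrix.transpose_mul, hΦΨ, Matrix.transpose_one]
    have hΦrank : Φ.rank = d := by
      refine le_antisymm (Φ.rank_le_height) ?_
      calc d = (1 : Matrix (Fin d) (Fin d) F).rank := by simp
        _ = (Φ * Ψ).rank := by rw [hΦΨ]
        _ ≤ Φ.rank := Matrix.rank_mul_le_left _ _
    have key : ∀ X : Matrix (Fin d) (Fin d) F, Ψᵀ * (Φᵀ * X * Φ) * Ψ = X := by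
      intro X
      calc Ψᵀ * (Φᵀ * X * Φ) * Ψ = Ψᵀ * (Φᵀ * (X * (Φ * Ψ))) := by
            simp only [Matrix.mul_assoc]
        _ = X := by
            rw [hΦΨ, Matrix.mul_one, ← Matrix.mul_assoc, hT, Matrix.one_mul]
    have e1 : Φᵀ * (M * (Φ * Φᵀ * M)) * Φ = Φᵀ * (c • M) * Φ := by
      have l1 : Φᵀ * (M * (Φ * Φᵀ * M)) * Φ = (Φᵀ * M * Φ) * (Φᵀ * M * Φ) := by
        simp only [Matrix.mul_assoc]
      have l2 : Φᵀ * (c • M) * Φ = c • (Φᵀ * M * Φ) := by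
        rw [Matrix.mul_smul, Matrix.smul_mul]
      rw [l1, l2, hGram, hGG]
    have e2 : M * (Φ * Φᵀ * M) = c • M := by
      have := congrArg (fun X => Ψᵀ * X * Ψ) e1
      simpa only [key] using this
    have e3 : Φ * Φᵀ * M = c • (1 : Matrix (Fin d) (Fin d) F) := by
      have := congrArg (fun X => M⁻¹ * X) e2
      simpa only [← Matrix.mul_assoc, Matrix.nonsing_inv_mul M hMdet, Matrix.one_mul,
        Matrix.mul_smul, Matrix.smul_apply] using this
    exact ⟨M, Φ, hMsymm, hMunit, hΦrank, hGram, e3, hdiag, hoff⟩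
end

section
/- Let n > d + 1 with n ≠ 2d, and let S ∈ ℤ^{n×n} be symmetric with zero diagonal and all off-diagonal entries in {1, −1}. Suppose there exist real numbers â > 0 and ĉ > 0 with (S + â·I)² = ĉ·(S + â·I) over ℝ and rank_ℝ(S + â·I) = d (so S is the signature matrix of a real d×n equiangular tight frame). Then â and ĉ are integers satisfying â²·(n−d) = d·(n−1) and ĉ²·d·(n−d) = n²·(n−1); moreover, for every finite field F of odd characteristic, the matrix Ḡ = S̄ + â·I ∈ F^{n×n} (entries reduced via the unique ring homomorphism ℤ → F) satisfies Ḡ² = ĉ·Ḡ, every diagonal entry of Ḡ equals the image of â, every off-diagonal entry of Ḡ squares to 1, and d' := rank_F Ḡ satisfies d' ≤ d, with d' = d whenever the image of ĉ in F is nonzero. -/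
open Polynomial Matrix

section helpers
variable {K L : Type*}

lemma submatrix_eq_mul [CommRing K] {n m r s : ℕ} (M : Matrix (Fin n) (Fin m) K)
    (f : Fin r → Fin n) (g : Fin s → Fin m) :
    M.submatrix f g =
      (Matrix.of fun i k => if f i = k then (1:K) else 0) * M *
        (Matrix.of fun k j => if k = g j then (1:K) else 0) := by
  ext i j
  simp [Matrix.mul_apply, ite_mul, mul_ite, Finset.sum_ite_eq, Finset.sum_ite_eq']

lemma rank_submatrix_le' [Field K] {n m r s : ℕ} (M : Matrix (Fin n) (Fin m) K)
    (f : Fin r → Fin n) (g : Fin s → Fin m) :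
    (M.submatrix f g).rank ≤ M.rank := by
  rw [submatrix_eq_mul]
  exact le_trans (Matrix.rank_mul_le_left _ _) (Matrix.rank_mul_le_right _ _)

lemma exists_cols [Field K] {n m : ℕ} (M : Matrix (Fin n) (Fin m) K) :
    ∃ g : Fin M.rank → Fin m, (M.submatrix id g).rank = M.rank := by
  classical
  obtain ⟨b, hb, hspan, hind⟩ := exists_linearIndependent K (Set.range Mᵀ)
  have hfin : b.Finite := Set.Finite.subset (Set.finite_range Mᵀ) hb
  haveI := hfin.fintype
  have hcard : Module.finrank K (Submodule.span K b) = b.toFinset.card :=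
    finrank_span_set_eq_card hind
  have hrank : M.rank = b.toFinset.card := by
    rw [Matrix.rank_eq_finrank_span_cols, show M.col = Mᵀ from rfl, ← hspan, hcard]
  have e : Fin M.rank ≃ b := by
    refine (Fintype.equivFinOfCardEq ?_).symm
    rw [hrank]; simp
  have hsel : ∀ x : b, ∃ j, Mᵀ j = (x : Fin n → K) := fun x => hb x.2
  choose g hg using fun i => hsel (e i)
  have hcomp : (fun i => Mᵀ (g i)) = Subtype.val ∘ e := by
    funext i; rw [hg]; rfl
  have hind' : LinearIndependent K fun i => Mᵀ (g i) := by
    rw [hcomp]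
    exact hind.comp e e.injective
  refine ⟨g, ?_⟩
  have h1 : (M.submatrix id g)ᵀ = Matrix.of fun i => Mᵀ (g i) := by
    ext i j; rfl
  rw [Matrix.rank_eq_finrank_span_cols, show (M.submatrix id g).col = (M.submatrix id g)ᵀ from rfl, h1]
  have : Set.range (Matrix.of fun i => Mᵀ (g i)) = Set.range fun i => Mᵀ (g i) := rfl
  rw [this, finrank_span_eq_card hind']
  simp

lemma isUnit_of_rank_eq [Field K] {r : ℕ} (A : Matrix (Fin r) (Fin r) K)
    (h : A.rank = r) : IsUnit A := by
  rw [← Matrix.mulVec_surjective_iff_isUnit]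
  have : LinearMap.range A.mulVecLin = ⊤ := by
    apply Submodule.eq_top_of_finrank_eq
    rw [← Matrix.rank]  -- rank def
    simp [h]
  intro y
  exact (LinearMap.range_eq_top.mp this) y

lemma exists_cols' [Field K] {n m r : ℕ} (M : Matrix (Fin n) (Fin m) K) (hr : M.rank = r) :
    ∃ g : Fin r → Fin m, (M.submatrix id g).rank = r := by
  subst hr; exact exists_cols M

lemma exists_isUnit_submatrix [Field K] {n m r : ℕ} (M : Matrix (Fin n) (Fin m) K)
    (hr : M.rank = r) :
    ∃ (f : Fin r → Fin n) (g : Fin r → Fin m), IsUnit (M.submatrix f g) := by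
  obtain ⟨g, hg⟩ := exists_cols' M hr
  set N := M.submatrix id g with hN
  have hNt : Nᵀ.rank = r := by rw [Matrix.rank_transpose, hg]
  obtain ⟨f, hf⟩ := exists_cols' Nᵀ hNt
  refine ⟨f, g, ?_⟩
  have heq : (Nᵀ.submatrix id f)ᵀ = M.submatrix f g := by
    ext i j; rfl
  apply isUnit_of_rank_eq
  rw [← heq, Matrix.rank_transpose, hf]

lemma det_map_int [Field K] {r : ℕ} (A : Matrix (Fin r) (Fin r) ℤ) :
    (A.map (Int.cast : ℤ → K)).det = ((A.det : ℤ) : K) := by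
  rw [show A.map (Int.cast : ℤ → K) = (Int.castRingHom K).mapMatrix A from rfl,
    ← RingHom.map_det]; rfl

/-- transfer of rank of an integer matrix across fields -/
lemma rank_cast_le [Field K] [Field L] {n m : ℕ} (M : Matrix (Fin n) (Fin m) ℤ)
    (h : ∀ z : ℤ, ((z : K) ≠ 0 → (z : L) ≠ 0)) :
    (M.map (Int.cast : ℤ → K)).rank ≤ (M.map (Int.cast : ℤ → L)).rank := by
  obtain ⟨f, g, hu⟩ := exists_isUnit_submatrix (M.map (Int.cast : ℤ → K)) rfl
  have hdet : (((M.submatrix f g).det : ℤ) : K) ≠ 0 := by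
    rw [Matrix.isUnit_iff_isUnit_det, Matrix.submatrix_map, det_map_int] at hu
    exact hu.ne_zero
  have hL : IsUnit ((M.map (Int.cast : ℤ → L)).submatrix f g) := by
    rw [Matrix.submatrix_map, Matrix.isUnit_iff_isUnit_det, det_map_int]
    exact isUnit_iff_ne_zero.mpr (h _ hdet)
  calc (M.map (Int.cast : ℤ → K)).rank
      = ((M.map (Int.cast : ℤ → L)).submatrix f g).rank := by
        rw [Matrix.rank_of_isUnit _ hL, Fintype.card_fin]
    _ ≤ _ := rank_submatrix_le' _ _ _

/-- rank split for `G * G = c • G`, `c ≠ 0`. -/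
lemma rank_split [Field K] {n : ℕ} (G : Matrix (Fin n) (Fin n) K) {c : K}
    (hc : c ≠ 0) (hG : G * G = c • G) :
    (c • (1 : Matrix (Fin n) (Fin n) K) - G).rank = n - G.rank := by
  have h1 : G * (c • (1 : Matrix (Fin n) (Fin n) K) - G) = 0 := by
    rw [Matrix.mul_sub, Matrix.mul_smul, Matrix.mul_one, hG, sub_self]
  have hle : (c • (1 : Matrix (Fin n) (Fin n) K) - G).rank ≤ n - G.rank := by
    have hsub : LinearMap.range (c • (1 : Matrix (Fin n) (Fin n) K) - G).mulVecLin
        ≤ LinearMap.ker G.mulVecLin := by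
      rintro x ⟨y, rfl⟩
      have := congrArg (fun M => Matrix.mulVecLin M y) h1
      simpa [Matrix.mulVecLin_mul] using this
    have hker : Module.finrank K (LinearMap.ker G.mulVecLin) = n - G.rank := by
      have h4 := LinearMap.finrank_range_add_finrank_ker G.mulVecLin
      simp only [Module.finrank_pi, Fintype.card_fin] at h4
      have h5 : G.rank = Module.finrank K (LinearMap.range G.mulVecLin) := rfl
      omega
    calc (c • (1 : Matrix (Fin n) (Fin n) K) - G).rank
        ≤ Module.finrank K (LinearMap.ker G.mulVecLin) :=
          Submodule.finrank_mono hsub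
      _ = n - G.rank := hker
  have hge : n ≤ (c • (1 : Matrix (Fin n) (Fin n) K) - G).rank + G.rank := by
    have hcu : IsUnit (c • (1 : Matrix (Fin n) (Fin n) K)) := by
      rw [Matrix.isUnit_iff_isUnit_det]
      simp [Matrix.det_smul, isUnit_iff_ne_zero, hc, pow_ne_zero]
    have h2 : (c • (1 : Matrix (Fin n) (Fin n) K)).rank = n := by
      rw [Matrix.rank_of_isUnit _ hcu, Fintype.card_fin]
    have h3 : c • (1 : Matrix (Fin n) (Fin n) K)
        = (c • (1 : Matrix (Fin n) (Fin n) K) - G) + G := (sub_add_cancel _ _).symm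
    have hadd : ∀ (A B : Matrix (Fin n) (Fin n) K), (A + B).rank ≤ A.rank + B.rank := by
      intro A B
      have hsub : LinearMap.range (A + B).mulVecLin
          ≤ LinearMap.range A.mulVecLin ⊔ LinearMap.range B.mulVecLin := by
        rintro x ⟨y, rfl⟩
        have : (A + B).mulVecLin y = A.mulVecLin y + B.mulVecLin y := by
          simp [Matrix.mulVecLin_apply, Matrix.add_mulVec]
        rw [this]
        exact Submodule.add_mem_sup (LinearMap.mem_range_self _ y) (LinearMap.mem_range_self _ y)
      calc (A + B).rank ≤ Module.finrank K
            (LinearMap.range A.mulVecLin ⊔ LinearMap.range B.mulVecLin : Submodule K _) :=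
            Submodule.finrank_mono hsub
        _ ≤ A.rank + B.rank := Submodule.finrank_add_le_finrank_add_finrank _ _
    calc n = (c • (1 : Matrix (Fin n) (Fin n) K)).rank := h2.symm
      _ = ((c • (1 : Matrix (Fin n) (Fin n) K) - G) + G).rank := by rw [← h3]
      _ ≤ _ := hadd _ _
  have hrle : G.rank ≤ n := by
    have := Matrix.rank_le_card_width G; simpa using this
  omega

lemma trace_eq_rank_of_idem [Field K] [CharZero K] {n : ℕ}
    (P : Matrix (Fin n) (Fin n) K) (h : P * P = P) : P.trace = (P.rank : K) := by
  classical
  set f := P.mulVecLin with hf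
  have hproj : LinearMap.IsProj (LinearMap.range f) f := by
    refine ⟨fun x => LinearMap.mem_range_self _ x, ?_⟩
    rintro x ⟨y, rfl⟩
    show f (f y) = f y
    have h2 : f.comp f = f := by
      rw [hf, ← Matrix.mulVecLin_mul, h]
    calc f (f y) = (f.comp f) y := rfl
      _ = f y := by rw [h2]
  have htr := hproj.trace
  have h2 : LinearMap.trace K (Fin n → K) f = P.trace := by
    rw [LinearMap.trace_eq_matrix_trace K (Pi.basisFun K (Fin n)) f]
    congr 1
    rw [show LinearMap.toMatrix (Pi.basisFun K (Fin n)) (Pi.basisFun K (Fin n))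
        = LinearMap.toMatrix' from LinearMap.toMatrix_eq_toMatrix']
    rw [hf, ← Matrix.toLin'_apply', LinearMap.toMatrix'_toLin']
  rw [h2] at htr
  rw [htr]
  rfl

lemma eval_charpoly' [CommRing K] {n : ℕ} (M : Matrix (Fin n) (Fin n) K) (r : K) :
    M.charpoly.eval r = (r • (1 : Matrix (Fin n) (Fin n) K) - M).det := by
  classical
  rw [Matrix.charpoly, ← Polynomial.coe_evalRingHom, RingHom.map_det]
  congr 1
  ext i j
  simp [Matrix.charmatrix_apply, Matrix.one_apply, Matrix.diagonal_apply, RingHom.mapMatrix_apply,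
    Matrix.smul_apply, Matrix.sub_apply, apply_ite]

end helpers

/-- Projecting a real ETF signature matrix (case `n ≠ 2d`) into a finite field of odd
characteristic yields an ETF Gram matrix over the finite field, in dimension
`d' ≤ d`, with `d' = d` whenever the projected frame constant is nonzero. -/
theorem stmt_1 (n d : ℕ) (hgt : d + 1 < n) (hne : n ≠ 2 * d)
    (S : Matrix (Fin n) (Fin n) ℤ) (hS : S.IsSymm)
    (hdiag : ∀ i, S i i = 0)
    (hoff : ∀ i j, i ≠ j → S i j = 1 ∨ S i j = -1)
    (ahat chat : ℝ) (ha : 0 < ahat) (hc : 0 < chat)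
    (htight : (S.map (Int.cast : ℤ → ℝ) + ahat • 1) * (S.map (Int.cast : ℤ → ℝ) + ahat • 1)
      = chat • (S.map (Int.cast : ℤ → ℝ) + ahat • 1))
    (hrank : (S.map (Int.cast : ℤ → ℝ) + ahat • 1).rank = d) :
    ∃ A C : ℤ, (A : ℝ) = ahat ∧ (C : ℝ) = chat ∧
      A ^ 2 * ((n : ℤ) - d) = (d : ℤ) * ((n : ℤ) - 1) ∧
      C ^ 2 * (d : ℤ) * ((n : ℤ) - d) = (n : ℤ) ^ 2 * ((n : ℤ) - 1) ∧
      ∀ (F : Type) [Field F] [Fintype F], ringChar F ≠ 2 →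
        (S.map (Int.cast : ℤ → F) + (A : F) • 1) * (S.map (Int.cast : ℤ → F) + (A : F) • 1)
            = (C : F) • (S.map (Int.cast : ℤ → F) + (A : F) • 1) ∧
        (∀ i, (S.map (Int.cast : ℤ → F) + (A : F) • 1) i i = (A : F)) ∧
        (∀ i j, i ≠ j → ((S.map (Int.cast : ℤ → F) + (A : F) • 1) i j) ^ 2 = 1) ∧
        (S.map (Int.cast : ℤ → F) + (A : F) • 1).rank ≤ d ∧
        ((C : F) ≠ 0 → (S.map (Int.cast : ℤ → F) + (A : F) • 1).rank = d) := by
  classical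
  set Sr := S.map (Int.cast : ℤ → ℝ) with hSr
  set G := Sr + ahat • (1 : Matrix (Fin n) (Fin n) ℝ) with hG
  have hn0 : 0 < n := by omega
  have hnR : (0:ℝ) < n := by exact_mod_cast hn0
  -- trace of G
  have htrS : Sr.trace = 0 := by
    simp [Matrix.trace, Matrix.diag, hSr, Matrix.map_apply, hdiag]
  have htrG : G.trace = ahat * n := by
    rw [hG, Matrix.trace_add, htrS, Matrix.trace_smul, Matrix.trace_one]
    simp [smul_eq_mul]
  -- trace of G * G
  have hent : ∀ i j, G i j = (S i j : ℝ) + if i = j then ahat else 0 := by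
    intro i j
    simp [hG, hSr, Matrix.add_apply, Matrix.smul_apply, Matrix.one_apply, Matrix.map_apply,
      mul_ite, mul_one, mul_zero]
  have hGsym : ∀ i j, G j i = G i j := by
    intro i j
    rw [hent, hent, hS.apply i j]
    by_cases h : i = j <;> simp [h, eq_comm]
  have htrGG : (G * G).trace = n * (ahat ^ 2 + (n - 1)) := by
    have h0 : (G * G).trace = ∑ i, ∑ j, G i j * G j i := by
      simp [Matrix.trace, Matrix.diag, Matrix.mul_apply]
    have hterm : ∀ i j, G i j * G j i = if i = j then ahat ^ 2 else 1 := by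
      intro i j
      by_cases h : i = j
      · subst h
        rw [hent]
        simp [hdiag]
        ring
      · rw [hGsym i j, hent i j]
        rcases hoff i j h with h1 | h1 <;> simp [h, h1]
    have hsum : ∀ i : Fin n, (∑ j, if i = j then ahat ^ 2 else (1:ℝ)) = ahat ^ 2 + ((n:ℝ) - 1) := by
      intro i
      have hsplit : ∀ j, (if i = j then ahat ^ 2 else (1:ℝ)) = (if i = j then ahat ^ 2 - 1 else 0) + 1 := by
        intro j; by_cases h : i = j <;> simp [h]
      rw [Finset.sum_congr rfl (fun j _ => hsplit j), Finset.sum_add_distrib,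
        Finset.sum_ite_eq Finset.univ i (fun _ => ahat ^ 2 - 1)]
      simp [Finset.card_univ]
      ring
    rw [h0]
    rw [Finset.sum_congr rfl (fun i _ => by rw [Finset.sum_congr rfl (fun j _ => hterm i j), hsum i])]
    rw [Finset.sum_const, Finset.card_univ]
    simp [nsmul_eq_mul]
    ring
  have htrGG' : (G * G).trace = chat * (ahat * n) := by
    rw [htight, Matrix.trace_smul, htrG, smul_eq_mul]
  have E_ca : chat * ahat = ahat ^ 2 + ((n:ℝ) - 1) := by
    have h1 : chat * (ahat * n) = n * (ahat ^ 2 + (n - 1)) := by rw [← htrGG', htrGG]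
    have := mul_left_cancel₀ (ne_of_gt hnR) (by linarith [h1] : (n:ℝ) * (chat * ahat) = n * (ahat ^ 2 + ((n:ℝ) - 1)))
    exact this
  -- idempotent
  have hidem : (chat⁻¹ • G) * (chat⁻¹ • G) = chat⁻¹ • G := by
    rw [Matrix.smul_mul, Matrix.mul_smul, htight, smul_smul, smul_smul]
    congr 1
    field_simp
  have hranksmul : (chat⁻¹ • G).rank = d := by
    have h1 : (chat⁻¹ • G).rank ≤ G.rank := by
      rw [show chat⁻¹ • G = (chat⁻¹ • (1 : Matrix (Fin n) (Fin n) ℝ)) * G from by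
        rw [Matrix.smul_mul, Matrix.one_mul]]
      exact Matrix.rank_mul_le_right _ _
    have key : (chat • (1 : Matrix (Fin n) (Fin n) ℝ)) * (chat⁻¹ • G) = G := by
      rw [Matrix.smul_mul, Matrix.one_mul, smul_smul, mul_inv_cancel₀ (ne_of_gt hc), one_smul]
    have h2 : G.rank ≤ (chat⁻¹ • G).rank := by
      conv_lhs => rw [← key]
      exact Matrix.rank_mul_le_right _ _
    omega
  have E_ad : ahat * n = chat * d := by
    have h1 := trace_eq_rank_of_idem _ hidem
    rw [hranksmul, Matrix.trace_smul, htrG, smul_eq_mul] at h1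
    field_simp at h1
    linarith [h1]
  have hd1 : 1 ≤ d := by
    by_contra h
    have hd0 : d = 0 := by omega
    rw [hd0] at E_ad
    have : ahat * (n:ℝ) = 0 := by simpa using E_ad
    nlinarith
  have hdR : (0:ℝ) < d := by exact_mod_cast hd1
  -- real identities
  have Ia : ahat ^ 2 * ((n:ℝ) - d) = d * ((n:ℝ) - 1) := by
    nlinarith [E_ca, E_ad]
  have Ic : chat ^ 2 * d * ((n:ℝ) - d) = (n:ℝ)^2 * ((n:ℝ) - 1) := by
    have h1 : chat ^ 2 * d * ((n:ℝ) - d) * d = (n:ℝ)^2 * ((n:ℝ)-1) * d := by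
      linear_combination ((n:ℝ)^2) * Ia - (((n:ℝ) - d) * (ahat * (n:ℝ) + chat * d)) * E_ad
    exact mul_right_cancel₀ (ne_of_gt hdR) h1
  -- determinant facts
  have hdetG : G.det = 0 := by
    by_contra h
    have hu : IsUnit G := (Matrix.isUnit_iff_isUnit_det G).mpr (isUnit_iff_ne_zero.mpr h)
    have := Matrix.rank_of_isUnit G hu
    rw [hrank, Fintype.card_fin] at this
    omega
  have hdetC : (chat • (1 : Matrix (Fin n) (Fin n) ℝ) - G).det = 0 := by
    by_contra h
    have hu : IsUnit (chat • (1 : Matrix (Fin n) (Fin n) ℝ) - G) :=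
      (Matrix.isUnit_iff_isUnit_det _).mpr (isUnit_iff_ne_zero.mpr h)
    have h1 : G * (chat • (1 : Matrix (Fin n) (Fin n) ℝ) - G) = 0 := by
      rw [Matrix.mul_sub, Matrix.mul_smul, Matrix.mul_one, htight, sub_self]
    have h2 : G = 0 := hu.mul_right_cancel (h1.trans (Matrix.zero_mul _).symm)
    rw [h2, Matrix.rank_zero] at hrank
    omega
  have h2ac : 2 * ahat - chat ≠ 0 := by
    intro h
    have hce : chat = 2 * ahat := by linarith
    rw [hce] at E_ad
    have : (n:ℝ) = 2 * d := by
      have := mul_left_cancel₀ (ne_of_gt ha) (by linarith : ahat * (n:ℝ) = ahat * (2*d))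
      exact this
    have : (n:ℕ) = 2 * d := by exact_mod_cast this
    exact hne this
  have hdetB : ((2 * ahat) • (1 : Matrix (Fin n) (Fin n) ℝ) - G).det ≠ 0 := by
    have hkey : ((2 * ahat) • (1 : Matrix (Fin n) (Fin n) ℝ) - G) *
        ((2 * ahat - chat) • (1 : Matrix (Fin n) (Fin n) ℝ) + G)
        = (2 * ahat * (2 * ahat - chat)) • (1 : Matrix (Fin n) (Fin n) ℝ) := by
      simp only [Matrix.sub_mul, Matrix.mul_add, Matrix.add_mul, Matrix.smul_mul,
        Matrix.mul_smul, Matrix.one_mul, Matrix.mul_one, htight, smul_smul]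
      module
    intro h
    have := congrArg Matrix.det hkey
    rw [Matrix.det_mul, h, zero_mul, Matrix.det_smul, Matrix.det_one, mul_one] at this
    have h2 : (2 * ahat * (2 * ahat - chat)) ≠ 0 := by
      apply mul_ne_zero
      · positivity
      · exact h2ac
    exact (pow_ne_zero _ h2) this.symm
  -- charpoly evals
  set p := S.charpoly with hp
  have hpm : (Sr).charpoly = p.map (Int.castRingHom ℝ) := by
    rw [hSr, hp]
    exact Matrix.charpoly_map S (Int.castRingHom ℝ)
  have ev1 : (p.map (Int.castRingHom ℝ)).eval (-ahat) = 0 := by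
    rw [← hpm, eval_charpoly']
    have h1 : (-ahat) • (1 : Matrix (Fin n) (Fin n) ℝ) - Sr = -G := by
      rw [hG]; module
    rw [h1, Matrix.det_neg, hdetG, mul_zero]
  have ev2 : (p.map (Int.castRingHom ℝ)).eval (chat - ahat) = 0 := by
    rw [← hpm, eval_charpoly']
    have h1 : (chat - ahat) • (1 : Matrix (Fin n) (Fin n) ℝ) - Sr
        = chat • (1 : Matrix (Fin n) (Fin n) ℝ) - G := by
      rw [hG]; module
    rw [h1, hdetC]
  have ev3 : (p.map (Int.castRingHom ℝ)).eval ahat ≠ 0 := by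
    rw [← hpm, eval_charpoly']
    have h1 : ahat • (1 : Matrix (Fin n) (Fin n) ℝ) - Sr
        = (2 * ahat) • (1 : Matrix (Fin n) (Fin n) ℝ) - G := by
      rw [hG]; module
    rw [h1]
    exact hdetB
  -- integrality
  have hmonic : p.Monic := S.charpoly_monic
  have hintneg : IsIntegral ℤ (-ahat : ℝ) := by
    refine ⟨p, hmonic, ?_⟩
    rw [← Polynomial.eval_map]
    exact ev1
  have hdn : (d:ℝ) < (n:ℝ) := by exact_mod_cast (by omega : d < n)
  have hnd : ((n:ℝ) - d) ≠ 0 := by linarith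
  set qq : ℚ := ((d:ℚ) * ((n:ℚ) - 1)) / ((n:ℚ) - (d:ℚ)) with hqqdef
  have hqq : ((qq : ℚ) : ℝ) = ahat ^ 2 := by
    have h1 : ((qq : ℚ) : ℝ) = ((d:ℝ) * ((n:ℝ) - 1)) / ((n:ℝ) - d) := by
      rw [hqqdef]; push_cast; ring
    rw [h1, div_eq_iff hnd]
    linarith [Ia]
  set μ : Polynomial ℚ := Polynomial.X ^ 2 - Polynomial.C qq with hμdef
  have hμmon : μ.Monic := Polynomial.monic_X_pow_sub_C qq two_ne_zero
  have hμdeg : μ.natDegree = 2 := by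
    rw [hμdef]; exact Polynomial.natDegree_X_pow_sub_C
  have haevμ : Polynomial.aeval (-ahat : ℝ) μ = 0 := by
    rw [hμdef]
    simp only [map_sub, map_pow, Polynomial.aeval_X, Polynomial.aeval_C]
    rw [show ((algebraMap ℚ ℝ) qq) = ((qq:ℚ):ℝ) from rfl, hqq]
    ring
  have hintQ : IsIntegral ℚ (-ahat : ℝ) :=
    ⟨μ, hμmon, by rwa [Polynomial.aeval_def] at haevμ⟩
  have hμmapeval : ∀ x : ℝ, (μ.map (algebraMap ℚ ℝ)).eval x = x ^ 2 - ahat ^ 2 := by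
    intro x
    rw [hμdef]
    simp only [Polynomial.map_sub, Polynomial.map_pow, Polynomial.map_X, Polynomial.map_C,
      Polynomial.eval_sub, Polynomial.eval_pow, Polynomial.eval_X, Polynomial.eval_C]
    rw [show ((algebraMap ℚ ℝ) qq) = ((qq:ℚ):ℝ) from rfl, hqq]
  have hcompQ : (algebraMap ℚ ℝ).comp (Int.castRingHom ℚ) = Int.castRingHom ℝ :=
    Subsingleton.elim _ _
  have hrat : ∃ r : ℚ, (r:ℝ) = ahat := by
    set m := minpoly ℚ (-ahat : ℝ) with hm
    have hmm : m.Monic := minpoly.monic hintQ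
    have hmdvd : m ∣ μ := minpoly.dvd ℚ _ haevμ
    by_cases hdeg : m.degree = 1
    · obtain ⟨r, hr⟩ := minpoly.degree_eq_one_iff.mp hdeg
      exact ⟨-r, by push_cast; rw [show ((r:ℚ):ℝ) = algebraMap ℚ ℝ r from rfl, hr]; ring⟩
    · exfalso
      have hdle : m.natDegree ≤ 2 := by
        rw [← hμdeg]; exact Polynomial.natDegree_le_of_dvd hmdvd hμmon.ne_zero
      have hdpos : 0 < m.natDegree := minpoly.natDegree_pos hintQ
      have hnd1 : m.natDegree ≠ 1 := fun h =>
        hdeg (by rw [Polynomial.degree_eq_natDegree hmm.ne_zero, h, Nat.cast_one])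
      have hd2 : m.natDegree = 2 := by omega
      obtain ⟨k, hk⟩ := hmdvd
      have hkmon : k.Monic := hmm.of_mul_monic_left (hk ▸ hμmon)
      have hkdeg : k.natDegree = 0 := by
        have h5 := Polynomial.natDegree_mul hmm.ne_zero hkmon.ne_zero
        rw [← hk, hμdeg, hd2] at h5
        omega
      have hk1 : k = 1 := hkmon.natDegree_eq_zero.mp hkdeg
      have hmμ : m = μ := by rw [hk, hk1, mul_one]
      set pQ := p.map (Int.castRingHom ℚ) with hpQ
      have haevp : Polynomial.aeval (-ahat : ℝ) pQ = 0 := by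
        rw [Polynomial.aeval_def, ← Polynomial.eval_map, hpQ, Polynomial.map_map, hcompQ]
        exact ev1
      have hdvdp : μ ∣ pQ := hmμ ▸ minpoly.dvd ℚ _ haevp
      obtain ⟨t, ht⟩ := hdvdp
      apply ev3
      have h1 : pQ.map (algebraMap ℚ ℝ) = p.map (Int.castRingHom ℝ) := by
        rw [hpQ, Polynomial.map_map, hcompQ]
      rw [← h1, ht, Polynomial.map_mul, Polynomial.eval_mul, hμmapeval]
      ring
  obtain ⟨r, hr⟩ := hrat
  have hintA : IsIntegral ℤ r := by
    rw [← isIntegral_algebraMap_iff (R := ℤ) (A := ℚ) (B := ℝ)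
      ((algebraMap ℚ ℝ).injective)]
    rw [show (algebraMap ℚ ℝ) r = ahat from hr]
    simpa using hintneg.neg
  obtain ⟨A, hA⟩ := IsIntegrallyClosed.isIntegral_iff.mp hintA
  have hAR : (A:ℝ) = ahat := by
    rw [← hr, show r = ((A:ℤ):ℚ) from hA.symm]
    push_cast; rfl
  -- C = A + B
  have hchat : chat = ahat * (n:ℝ) / d := by
    field_simp
    linarith [E_ad]
  have hintb : IsIntegral ℤ (chat - ahat : ℝ) := by
    refine ⟨p, hmonic, ?_⟩
    rw [← Polynomial.eval_map]
    exact ev2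
  set rb : ℚ := (A:ℚ) * (n:ℚ) / (d:ℚ) - (A:ℚ) with hrbdef
  have hrb : ((rb:ℚ):ℝ) = chat - ahat := by
    rw [hrbdef]
    push_cast
    rw [hAR, hchat]
  have hintrb : IsIntegral ℤ rb := by
    rw [← isIntegral_algebraMap_iff (R := ℤ) (A := ℚ) (B := ℝ)
      ((algebraMap ℚ ℝ).injective)]
    rw [show (algebraMap ℚ ℝ) rb = ((rb:ℚ):ℝ) from rfl, hrb]
    exact hintb
  obtain ⟨B, hB⟩ := IsIntegrallyClosed.isIntegral_iff.mp hintrb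
  have hBR : (B:ℝ) = chat - ahat := by
    rw [← hrb, show rb = ((B:ℤ):ℚ) from hB.symm]
    push_cast; rfl
  have hCR : ((A + B : ℤ) : ℝ) = chat := by push_cast; rw [hAR, hBR]; ring
  refine ⟨A, A + B, hAR, hCR, ?_, ?_, ?_⟩
  · -- A identity
    have h1 : ((A ^ 2 * ((n:ℤ) - d) : ℤ) : ℝ) = (((d:ℤ) * ((n:ℤ) - 1) : ℤ) : ℝ) := by
      push_cast
      rw [hAR]
      linarith [Ia]
    exact_mod_cast h1
  · -- C identity
    have h1 : (((A + B) ^ 2 * (d:ℤ) * ((n:ℤ) - d) : ℤ) : ℝ)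
        = (((n:ℤ) ^ 2 * ((n:ℤ) - 1) : ℤ) : ℝ) := by
      push_cast
      rw [show ((A:ℝ) + B) = chat by rw [hAR, hBR]; ring]
      linarith [Ic]
    exact_mod_cast h1
  -- finite field part
  intro F _ _ _
  set Gz : Matrix (Fin n) (Fin n) ℤ := S + A • 1 with hGzdef
  have hIC : ∀ (z : ℤ) (i j : Fin n), (z : Matrix (Fin n) (Fin n) ℤ) i j
      = if i = j then z else 0 := by
    intro z i j
    rw [← Matrix.diagonal_intCast, Matrix.diagonal_apply]
    simp
  have hGzent : ∀ i j, Gz i j = S i j + if i = j then A else 0 := by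
    intro i j
    by_cases h : i = j <;>
      simp [hGzdef, Matrix.add_apply, Matrix.smul_apply, Matrix.one_apply, h, hIC,
        smul_eq_mul, mul_one, mul_zero]
  have hAB : (A:ℝ) + (B:ℝ) = chat := by push_cast at hCR; exact hCR
  have hGzR : Gz.map (Int.cast : ℤ → ℝ) = G := by
    ext i j
    rw [Matrix.map_apply, hGzent, hent]
    by_cases h : i = j <;> simp [h] <;> push_cast <;> rw [hAR]
  have hGzcast : ∀ i j, ((Gz i j : ℤ) : ℝ) = G i j := by
    intro i j; rw [← hGzR]; rfl
  have hsmulR : ((A + B) • Gz).map (Int.cast : ℤ → ℝ) = chat • G := by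
    ext i j
    rw [Matrix.map_apply, Matrix.smul_apply, Matrix.smul_apply, smul_eq_mul, smul_eq_mul,
      Int.cast_mul, hGzcast, hCR]
  have hGzsq : Gz * Gz = (A + B) • Gz := by
    have hmap : (Gz * Gz).map (Int.cast : ℤ → ℝ) = ((A + B) • Gz).map (Int.cast : ℤ → ℝ) := by
      calc (Gz * Gz).map (Int.cast : ℤ → ℝ)
          = Gz.map (Int.cast : ℤ → ℝ) * Gz.map (Int.cast : ℤ → ℝ) :=
            Matrix.map_mul (f := Int.castRingHom ℝ)
        _ = chat • G := by rw [hGzR, htight]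
        _ = ((A + B) • Gz).map (Int.cast : ℤ → ℝ) := hsmulR.symm
    ext i j
    have h2 := congrFun (congrFun hmap i) j
    simp only [Matrix.map_apply] at h2
    exact_mod_cast h2
  have hcast1 : ∀ z : ℤ, (z : F) ≠ 0 → (z : ℚ) ≠ 0 := by
    intro z hz h0
    apply hz
    have : z = 0 := by exact_mod_cast h0
    rw [this]; simp
  have hcast2 : ∀ z : ℤ, (z : ℚ) ≠ 0 → (z : ℝ) ≠ 0 := by
    intro z hz h0
    apply hz
    have : z = 0 := by exact_mod_cast h0
    rw [this]; simp
  have hGzF : Gz.map (Int.cast : ℤ → F) = S.map Int.cast + ((A:ℤ) : F) • 1 := by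
    ext i j
    rw [Matrix.map_apply, hGzent]
    by_cases h : i = j <;>
      simp [h, Matrix.add_apply, Matrix.map_apply, Matrix.smul_apply, Matrix.one_apply,
        smul_eq_mul, mul_one, mul_zero] <;> push_cast <;> ring
  have hFsq : (Gz.map (Int.cast : ℤ → F)) * (Gz.map (Int.cast : ℤ → F))
      = ((A + B : ℤ) : F) • Gz.map (Int.cast : ℤ → F) := by
    calc (Gz.map (Int.cast : ℤ → F)) * (Gz.map (Int.cast : ℤ → F))
        = (Gz * Gz).map (Int.cast : ℤ → F) := (Matrix.map_mul (f := Int.castRingHom F)).symm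
      _ = ((A + B : ℤ) : F) • Gz.map (Int.cast : ℤ → F) := by
          rw [hGzsq]
          ext i j
          rw [Matrix.map_apply, Matrix.smul_apply, Matrix.smul_apply, smul_eq_mul, smul_eq_mul,
            Int.cast_mul, Matrix.map_apply]
  have hrankF : (Gz.map (Int.cast : ℤ → F)).rank ≤ d := by
    have e1 := rank_cast_le (K := F) (L := ℚ) Gz hcast1
    have e2 := rank_cast_le (K := ℚ) (L := ℝ) Gz hcast2
    have e4 : (Gz.map (Int.cast : ℤ → ℝ)).rank = d := by rw [hGzR]; exact hrank
    omega
  refine ⟨?_, ?_, ?_, ?_, ?_⟩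
  · rw [← hGzF]; exact hFsq
  · intro i
    simp [Matrix.add_apply, Matrix.map_apply, hdiag, Matrix.smul_apply, Matrix.one_apply,
      smul_eq_mul, mul_one]
  · intro i j hij
    rcases hoff i j hij with h | h <;>
      simp [Matrix.add_apply, Matrix.map_apply, h, Matrix.smul_apply, Matrix.one_apply, hij,
        smul_eq_mul, mul_zero] <;>
      norm_num
  · rw [← hGzF]; exact hrankF
  · intro hCne
    rw [← hGzF]
    have hsplitF := rank_split (Gz.map (Int.cast : ℤ → F)) hCne hFsq
    have hsplitR := rank_split G (ne_of_gt hc) htight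
    rw [hrank] at hsplitR
    set Hz : Matrix (Fin n) (Fin n) ℤ := (A + B) • (1 : Matrix (Fin n) (Fin n) ℤ) - Gz
      with hHzdef
    have hHzent : ∀ i j, Hz i j = (if i = j then (A + B) else 0) - Gz i j := by
      intro i j
      by_cases h : i = j <;>
        simp [hHzdef, Matrix.sub_apply, Matrix.smul_apply, Matrix.one_apply, h, hIC,
          smul_eq_mul, mul_one, mul_zero]
    have hHzF : Hz.map (Int.cast : ℤ → F)
        = ((A + B : ℤ) : F) • 1 - Gz.map (Int.cast : ℤ → F) := by
      ext i j
      rw [Matrix.map_apply, hHzent]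
      by_cases h : i = j
      · simp only [if_pos h, Matrix.sub_apply, Matrix.smul_apply, Matrix.one_apply,
          Matrix.map_apply, smul_eq_mul, mul_one]
        push_cast
        ring
      · simp only [if_neg h, Matrix.sub_apply, Matrix.smul_apply, Matrix.one_apply,
          Matrix.map_apply, smul_eq_mul, mul_zero]
        push_cast
        ring
    have hHzR : Hz.map (Int.cast : ℤ → ℝ)
        = chat • (1 : Matrix (Fin n) (Fin n) ℝ) - G := by
      ext i j
      rw [Matrix.map_apply, hHzent]
      by_cases h : i = j
      · simp only [if_pos h, Matrix.sub_apply, Matrix.smul_apply, Matrix.one_apply,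
          smul_eq_mul, mul_one]
        push_cast
        rw [hGzcast, hAB]
      · simp only [if_neg h, Matrix.sub_apply, Matrix.smul_apply, Matrix.one_apply,
          smul_eq_mul, mul_zero]
        push_cast
        rw [hGzcast]
    have e1 := rank_cast_le (K := F) (L := ℚ) Hz hcast1
    have e2 := rank_cast_le (K := ℚ) (L := ℝ) Hz hcast2
    have e4 : (Hz.map (Int.cast : ℤ → ℝ)).rank = n - d := by rw [hHzR]; exact hsplitR
    rw [hHzF] at e1
    rw [hsplitF] at e1
    have e5 : (Gz.map (Int.cast : ℤ → F)).rank ≤ n := by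
      have := Matrix.rank_le_card_width (Gz.map (Int.cast : ℤ → F))
      simpa using this
    omega
end

section
/- Let F be a finite field of odd characteristic p, let n ≥ 2, and suppose G ∈ F^{n×n} is symmetric with G_{ii} = a for all i, (G_{ij})² = 1 for all i ≠ j, G² = cG, and rank G = d (so G is the Gram matrix of an (a,1,c)-ETF of n vectors in a d-dimensional orthogonal geometry over F). Then a^{p²} = a and c^{p²} = c (so a and c lie in the subfield of F of order at most p²); moreover, if n ≠ 2d or c = 0, then a^p = a and c^p = c (so a and c lie in the prime subfield isomorphic to 𝔽_p). -/
open Matrix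

/-- Rank of a square matrix is invariant under applying a ring automorphism entrywise. -/
private lemma rank_map_equiv {n : ℕ} {F : Type} [Field F] (σ : F ≃+* F)
    (A : Matrix (Fin n) (Fin n) F) : (A.map ⇑σ).rank = A.rank := by
  have hAA : (A.map ⇑σ).map ⇑(σ.symm) = A := by
    ext i j; simp [Matrix.map_apply]
  have hmem : ∀ x : Fin n → F, x ∈ LinearMap.range (A.map ⇑σ).mulVecLin →
      (fun i => σ.symm (x i)) ∈ LinearMap.range A.mulVecLin := by
    rintro x ⟨v, rfl⟩
    refine ⟨fun i => σ.symm (v i), funext fun i => ?_⟩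
    rw [mulVecLin_apply, mulVecLin_apply]
    have h := RingHom.map_mulVec (σ.symm : F →+* F) (A.map ⇑σ) v i
    simp only [RingEquiv.coe_toRingHom] at h
    rw [hAA] at h
    simpa [Function.comp_def] using h.symm
  have hmem' : ∀ x : Fin n → F, x ∈ LinearMap.range A.mulVecLin →
      (fun i => σ (x i)) ∈ LinearMap.range (A.map ⇑σ).mulVecLin := by
    rintro x ⟨v, rfl⟩
    refine ⟨fun i => σ (v i), funext fun i => ?_⟩
    rw [mulVecLin_apply, mulVecLin_apply]
    have h := RingHom.map_mulVec (σ : F →+* F) A v i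
    simp only [RingEquiv.coe_toRingHom] at h
    simpa [Function.comp_def] using h.symm
  have key : Module.rank F ↥(LinearMap.range (A.map ⇑σ).mulVecLin)
      = Module.rank F ↥(LinearMap.range A.mulVecLin) := by
    refine rank_eq_of_equiv_equiv (ZeroHom.mk ⇑σ.symm (map_zero _)) ?_ σ.symm.bijective ?_
    · exact
      { toFun := fun x => ⟨fun i => σ.symm (x.1 i), hmem x.1 x.2⟩
        invFun := fun y => ⟨fun i => σ (y.1 i), hmem' y.1 y.2⟩
        left_inv := fun x => Subtype.ext (funext fun i => σ.apply_symm_apply _)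
        right_inv := fun y => Subtype.ext (funext fun i => σ.symm_apply_apply _)
        map_add' := fun x y => Subtype.ext (funext fun i => map_add σ.symm _ _) }
    · intro r m
      refine Subtype.ext (funext fun i => ?_)
      exact map_mul σ.symm r (m.1 i)
  rw [Matrix.rank, Matrix.rank, Module.finrank, Module.finrank, key]

/-- If `G² = cG` with `c ≠ 0`, then `rank (G - c•1) = n - rank G`. -/
private lemma rank_sub_smul_one {n : ℕ} {F : Type} [Field F] {c : F} (hc : c ≠ 0)
    {G : Matrix (Fin n) (Fin n) F} (h : G * G = c • G) :
    (G - c • 1).rank = n - G.rank := by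
  classical
  have hker : LinearMap.range (G - c • (1 : Matrix (Fin n) (Fin n) F)).mulVecLin
      = LinearMap.ker G.mulVecLin := by
    ext x
    simp only [LinearMap.mem_range, LinearMap.mem_ker, mulVecLin_apply]
    constructor
    · rintro ⟨v, rfl⟩
      rw [sub_mulVec, smul_mulVec, one_mulVec, mulVec_sub, mulVec_mulVec, h,
        smul_mulVec, mulVec_smul, sub_self]
    · intro hx
      refine ⟨(-c⁻¹) • x, ?_⟩
      rw [mulVec_smul, sub_mulVec, smul_mulVec, one_mulVec, hx, zero_sub, smul_neg,
        neg_smul, neg_neg, smul_smul, inv_mul_cancel₀ hc, one_smul]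
  have h2 := LinearMap.finrank_range_add_finrank_ker G.mulVecLin
  rw [Module.finrank_fin_fun] at h2
  rw [Matrix.rank, hker, Matrix.rank]
  omega

/-- The parameters `a, c` of an `(a,1,c)`-ETF of `n` vectors in a `d`-dimensional orthogonal
geometry over a finite field of odd characteristic `p` lie in the subfield of order `p²`;
if `n ≠ 2d` or `c = 0`, they lie in the prime subfield `𝔽_p`. -/
theorem stmt_4 (p : ℕ) (hp : p.Prime) (hodd : Odd p)
    (F : Type) [Field F] [Fintype F] [CharP F p]
    (n d : ℕ) (hn : 2 ≤ n) (a c : F)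
    (G : Matrix (Fin n) (Fin n) F) (hG : G.IsSymm)
    (hdiag : ∀ i, G i i = a) (hoff : ∀ i j, i ≠ j → (G i j) ^ 2 = 1)
    (htight : G * G = c • G) (hrank : G.rank = d) :
    a ^ (p ^ 2) = a ∧ c ^ (p ^ 2) = c ∧
    ((n ≠ 2 * d ∨ c = 0) → (a ^ p = a ∧ c ^ p = c)) := by
  classical
  haveI : Fact p.Prime := ⟨hp⟩
  -- elements that square to 1 are fixed by Frobenius
  have hfix : ∀ x : F, x ^ 2 = 1 → x ^ p = x := by
    intro x hx
    obtain ⟨k, hk⟩ := hodd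
    have hk2 : p = 2 * k + 1 := by omega
    rw [hk2, pow_add, pow_mul, hx, one_pow, one_mul, pow_one]
  have hcast : ∀ k : ℕ, ((k : F)) ^ p = k := by
    intro k
    have h := map_natCast (frobenius F p) k
    rw [frobenius_def] at h
    exact h
  have h2p : (2 : F) ^ p = 2 := by
    have := hcast 2
    simpa using this
  have h2ne : (2 : F) ≠ 0 := by
    intro h2
    have hdvd : p ∣ 2 := (CharP.cast_eq_zero_iff F p 2).mp (by exact_mod_cast h2)
    have hp2 : p = 2 := (Nat.prime_dvd_prime_iff_eq hp Nat.prime_two).mp hdvd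
    obtain ⟨k, hk⟩ := hodd
    omega
  -- indices
  set i0 : Fin n := ⟨0, by omega⟩ with hi0
  set i1 : Fin n := ⟨1, by omega⟩ with hi1
  have h01 : i0 ≠ i1 := by simp [hi0, hi1, Fin.ext_iff]
  have hε : G i0 i1 ^ 2 = 1 := hoff _ _ h01
  -- diagonal equation : a² + (n-1) = c a
  have hdiageq : a ^ 2 + ((n : F) - 1) = c * a := by
    have hs := Finset.sum_sdiff (f := fun k => G i0 k * G k i0)
      (Finset.subset_univ ({i0} : Finset (Fin n)))
    rw [Finset.sum_singleton] at hs
    have h2 : (G * G) i0 i0 = c * a := by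
      rw [htight]; simp [hdiag i0]
    rw [Matrix.mul_apply, ← hs] at h2
    have h3 : ∑ k ∈ Finset.univ \ ({i0} : Finset (Fin n)), G i0 k * G k i0 = (n : F) - 1 := by
      have hone : ∀ k ∈ Finset.univ \ ({i0} : Finset (Fin n)), G i0 k * G k i0 = 1 := by
        intro k hk
        have hk' : k ≠ i0 := by
          simpa using (Finset.mem_sdiff.mp hk).2
        rw [hG.apply i0 k, ← sq, hoff i0 k (Ne.symm hk')]
      rw [Finset.sum_congr rfl hone, Finset.sum_const, Finset.card_sdiff_of_subset (Finset.subset_univ _),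
        Finset.card_univ, Fintype.card_fin, Finset.card_singleton, nsmul_eq_mul, mul_one,
        Nat.cast_sub (by omega), Nat.cast_one]
    rw [h3, hdiag i0] at h2
    linear_combination h2
  -- off-diagonal equation
  have h1 : ∑ k ∈ Finset.univ \ ({i0, i1} : Finset (Fin n)), G i0 k * G k i1
      + (a * G i0 i1 + G i0 i1 * a) = c * G i0 i1 := by
    have hs := Finset.sum_sdiff (f := fun k => G i0 k * G k i1)
      (Finset.subset_univ ({i0, i1} : Finset (Fin n)))
    rw [Finset.sum_pair h01, hdiag i0, hdiag i1] at hs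
    rw [hs, ← Matrix.mul_apply, htight]
    simp
  have hSe : ∑ k ∈ Finset.univ \ ({i0, i1} : Finset (Fin n)), G i0 k * G k i1
      = (c - 2 * a) * G i0 i1 := by linear_combination h1
  -- t := c - 2a is Frobenius-fixed
  have htp : (c - 2 * a) ^ p = c - 2 * a := by
    have hxe : c - 2 * a
        = (∑ k ∈ Finset.univ \ ({i0, i1} : Finset (Fin n)), G i0 k * G k i1) * G i0 i1 := by
      rw [hSe]
      linear_combination (-(c - 2 * a)) * hε
    rw [hxe, mul_pow, hfix _ hε]
    congr 1
    rw [sum_pow_char]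
    refine Finset.sum_congr rfl fun k hk => ?_
    have hk' := Finset.mem_sdiff.mp hk
    simp only [Finset.mem_insert, Finset.mem_singleton] at hk'
    push_neg at hk'
    apply hfix
    rw [mul_pow, hoff i0 k (Ne.symm hk'.2.1), hoff k i1 hk'.2.2, one_mul]
  -- quadratic for a over the prime field
  have hquad : a ^ 2 = ((n : F) - 1) - (c - 2 * a) * a := by linear_combination -hdiageq
  have hn1p : ((n : F) - 1) ^ p = (n : F) - 1 := by
    rw [sub_pow_char, hcast, one_pow]
  have hquadp : (a ^ p) ^ 2 = ((n : F) - 1) - (c - 2 * a) * a ^ p := by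
    have h := congrArg (· ^ p) hquad
    rw [← pow_mul, mul_comm 2 p, pow_mul, sub_pow_char, mul_pow, htp, hn1p] at h
    exact h
  have hpsq : ∀ x : F, x ^ (p ^ 2) = (x ^ p) ^ p := by
    intro x; rw [← pow_mul, sq]
  by_cases hap : a ^ p = a
  · have hcp : c ^ p = c := by
      have hc2 : c = (c - 2 * a) + 2 * a := by ring
      calc c ^ p = ((c - 2 * a) + 2 * a) ^ p := by rw [← hc2]
        _ = (c - 2 * a) ^ p + (2 * a) ^ p := add_pow_char _ _ p
        _ = (c - 2 * a) + 2 * a := by rw [htp, mul_pow, h2p, hap]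
        _ = c := by ring
    exact ⟨by rw [hpsq, hap, hap], by rw [hpsq, hcp, hcp], fun _ => ⟨hap, hcp⟩⟩
  · -- hard case : a^p = a - c
    have hsum : a ^ p = a - c := by
      have hfac : (a - a ^ p) * (a + a ^ p + (c - 2 * a)) = 0 := by
        linear_combination hquad - hquadp
      rcases mul_eq_zero.mp hfac with h | h
      · exact absurd (sub_eq_zero.mp h).symm hap
      · linear_combination h
    have hcp : c ^ p = -c := by
      have hc2 : c = (c - 2 * a) + 2 * a := by ring
      calc c ^ p = ((c - 2 * a) + 2 * a) ^ p := by rw [← hc2]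
        _ = (c - 2 * a) ^ p + (2 * a) ^ p := add_pow_char _ _ p
        _ = (c - 2 * a) + 2 * (a - c) := by rw [htp, mul_pow, h2p, hsum]
        _ = -c := by ring
    have hap2 : a ^ (p ^ 2) = a := by
      rw [hpsq, hsum, sub_pow_char, hsum, hcp]; ring
    have hcp2 : c ^ (p ^ 2) = c := by
      rw [hpsq, hcp]
      obtain ⟨k, hk⟩ := hodd
      have hodd' : Odd p := ⟨k, hk⟩
      rw [hodd'.neg_pow, hcp, neg_neg]
    refine ⟨hap2, hcp2, fun h => ?_⟩
    exfalso
    have hc0 : c ≠ 0 := by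
      intro hc
      apply hap
      have ht' : (-(2 * a)) ^ p = -(2 * a) := by
        have := htp; rw [hc] at this; simpa using this
      obtain ⟨k, hk⟩ := hodd
      have hodd' : Odd p := ⟨k, hk⟩
      rw [hodd'.neg_pow, mul_pow, h2p, neg_inj] at ht'
      exact mul_left_cancel₀ h2ne ht'
    have hn2d : n ≠ 2 * d := h.resolve_right hc0
    -- Frobenius automorphism
    have hbij : Function.Bijective (frobenius F p) :=
      Finite.injective_iff_bijective.mp (frobenius F p).injective
    let σ : F ≃+* F := RingEquiv.ofBijective (frobenius F p) hbij
    have hmap : G.map ⇑σ = G - c • 1 := by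
      ext i j
      have hσ : ∀ x : F, σ x = x ^ p := fun x => rfl
      by_cases hij : i = j
      · subst hij
        rw [Matrix.map_apply, hσ, hdiag i, hsum]
        simp [Matrix.sub_apply, Matrix.smul_apply, Matrix.one_apply_eq, hdiag i]
      · rw [Matrix.map_apply, hσ, hfix _ (hoff i j hij)]
        simp [Matrix.sub_apply, Matrix.smul_apply, Matrix.one_apply_ne hij]
    have hr1 : (G.map ⇑σ).rank = G.rank := rank_map_equiv σ G
    have hr2 : (G - c • 1).rank = n - G.rank := rank_sub_smul_one hc0 htight
    rw [hmap, hr2, hrank] at hr1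
    exact hn2d (by omega)
end

section
/- Let F be a finite field of odd characteristic p, and suppose there exist a, b, c ∈ F and a symmetric matrix G ∈ F^{n×n} with G_{ii} = a for all i, (G_{ij})² = b for all i ≠ j, G² = cG, and rank G = d, where n ≠ d and n ≠ 2d (so an ETF of n ∉ {d, 2d} vectors exists in a d-dimensional orthogonal geometry over F). If (d : ZMod p) ≠ 0 and (n : ZMod p) ≠ 1, then (n : ZMod p) ≠ (d : ZMod p), and there exists a nonzero x ∈ ZMod p with x² · ((n : ZMod p) − (d : ZMod p)) = (d : ZMod p) · ((n : ZMod p) − 1); that is, d(n−1)/(n−d) is a nonzero square in 𝔽_p. -/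
open Matrix Polynomial

section Aux

/-- rank is invariant under applying a ring automorphism entrywise. -/
lemma rank_map_ringEquiv {n m : ℕ} {F : Type} [Field F] (σ : F ≃+* F)
    (M : Matrix (Fin m) (Fin n) F) : (M.map σ).rank = M.rank := by
  classical
  let e : (Fin n → F) ≃+ (Fin n → F) := AddEquiv.piCongrRight (fun _ => σ.toAddEquiv)
  let e' : (Fin m → F) ≃+ (Fin m → F) := AddEquiv.piCongrRight (fun _ => σ.toAddEquiv)
  have he : ∀ (v : Fin n → F) k, e v k = σ (v k) := fun _ _ => rfl
  have he' : ∀ (v : Fin m → F) k, e' v k = σ (v k) := fun _ _ => rfl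
  have key : ∀ x : Fin n → F, (M.map σ).mulVecLin (e x) = e' (M.mulVecLin x) := by
    intro x
    funext k
    rw [he']
    simp only [Matrix.mulVecLin_apply, Matrix.mulVec, dotProduct, Matrix.map_apply,
      _root_.map_sum]
    exact Finset.sum_congr rfl fun j _ => by rw [he, _root_.map_mul σ]
  have hrange : ∀ w, w ∈ LinearMap.range (M.map σ).mulVecLin ↔
      ∃ v ∈ LinearMap.range M.mulVecLin, e' v = w := by
    intro w
    constructor
    · rintro ⟨v, rfl⟩
      exact ⟨M.mulVecLin (e.symm v), ⟨_, rfl⟩, by rw [← key, e.apply_symm_apply]⟩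
    · rintro ⟨v, ⟨x, rfl⟩, rfl⟩
      exact ⟨e x, key x⟩
  let j : LinearMap.range M.mulVecLin ≃+ LinearMap.range (M.map σ).mulVecLin :=
    { toFun := fun v => ⟨e' v.1, (hrange _).2 ⟨v.1, v.2, rfl⟩⟩
      invFun := fun w => ⟨e'.symm w.1, by
        obtain ⟨v, hv, hvw⟩ := (hrange w.1).1 w.2
        rwa [← hvw, e'.symm_apply_apply]⟩
      left_inv := fun v => Subtype.ext (e'.symm_apply_apply v.1)
      right_inv := fun w => Subtype.ext (e'.apply_symm_apply w.1)
      map_add' := fun v w => Subtype.ext (_root_.map_add e' v.1 w.1) }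
  have hr : Module.rank F (LinearMap.range M.mulVecLin)
      = Module.rank F (LinearMap.range (M.map σ).mulVecLin) := by
    refine rank_eq_of_equiv_equiv (⟨σ, _root_.map_zero σ⟩ : ZeroHom F F) j σ.bijective ?_
    rintro r ⟨v, hv⟩
    refine Subtype.ext ?_
    show e' (r • v) = σ r • e' v
    funext k
    show σ ((r • v) k) = (σ r • e' v) k
    rw [Pi.smul_apply, Pi.smul_apply, he', smul_eq_mul, smul_eq_mul, _root_.map_mul σ]
  unfold Matrix.rank Module.finrank
  rw [hr]

/-- trace of an idempotent matrix equals its rank (as element of the field). -/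
lemma trace_idem {n : ℕ} {F : Type} [Field F] (P : Matrix (Fin n) (Fin n) F)
    (h : P * P = P) : Matrix.trace P = (P.rank : F) := by
  classical
  have hproj : LinearMap.IsProj (LinearMap.range P.mulVecLin) P.mulVecLin := by
    constructor
    · exact fun x => ⟨x, rfl⟩
    · rintro x ⟨y, rfl⟩
      show (P.mulVecLin ∘ₗ P.mulVecLin) y = _
      rw [← Matrix.mulVecLin_mul, h]
  have ht := hproj.trace
  have hmt : LinearMap.trace F (Fin n → F) P.mulVecLin = Matrix.trace P := by
    rw [LinearMap.trace_eq_matrix_trace F (Pi.basisFun F (Fin n)),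
      LinearMap.toMatrix_eq_toMatrix']
    congr 1
    exact LinearMap.toMatrix'_toLin' P
  rw [← hmt, ht]
  rfl

/-- An element of a finite field of char `p` fixed by Frobenius lies in the prime field. -/
lemma mem_prime_field {p : ℕ} [Fact p.Prime] {F : Type} [Field F] [Fintype F] [CharP F p]
    (x : F) (hx : x ^ p = x) : ∃ z : ZMod p, (ZMod.castHom (dvd_refl p) F) z = x := by
  classical
  set i := ZMod.castHom (dvd_refl p) F with hi
  by_contra hcon
  push_neg at hcon
  have hp1 : 1 < p := (Fact.out : p.Prime).one_lt
  set f : F[X] := X ^ p - X with hf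
  have hf0 : f ≠ 0 := FiniteField.X_pow_card_sub_X_ne_zero F hp1
  have hroot : ∀ y : F, y ^ p = y → y ∈ f.roots := by
    intro y hy
    rw [mem_roots hf0]
    simp [hf, hy]
  have hsub : (Finset.univ.image ⇑i ∪ {x}) ⊆ f.roots.toFinset := by
    intro y hy
    rw [Multiset.mem_toFinset]
    rcases Finset.mem_union.1 hy with hy | hy
    · obtain ⟨z, _, rfl⟩ := Finset.mem_image.1 hy
      apply hroot
      rw [← _root_.map_pow, ZMod.pow_card]
    · rw [Finset.mem_singleton] at hy
      subst hy
      exact hroot _ hx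
  have hcard1 : (Finset.univ.image ⇑i ∪ {x}).card = p + 1 := by
    rw [Finset.union_comm, Finset.card_union_of_disjoint, Finset.card_image_of_injective _
      (ZMod.castHom (dvd_refl p) F).injective]
    · simp [ZMod.card]; ring
    · simp only [Finset.disjoint_singleton_left, Finset.mem_image]
      rintro ⟨z, _, hz⟩
      exact hcon z hz
  have hcard2 : f.roots.toFinset.card ≤ p := by
    calc f.roots.toFinset.card ≤ Multiset.card f.roots := Multiset.toFinset_card_le _
    _ ≤ f.natDegree := f.card_roots'
    _ = p := FiniteField.X_pow_card_sub_X_natDegree_eq F hp1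
  have := Finset.card_le_card hsub
  omega

end Aux

/-- If an ETF of `n ∉ {d, 2d}` vectors exists in a `d`-dimensional orthogonal geometry over a
finite field of odd characteristic `p`, and `d ≢ 0`, `n ≢ 1` mod `p`, then `n ≢ d` mod `p`
and `d(n-1)/(n-d)` is a nonzero square in `𝔽_p`. -/
theorem stmt_5 (p : ℕ) (hp : p.Prime) (hodd : Odd p)
    (F : Type) [Field F] [Fintype F] [CharP F p]
    (n d : ℕ) (hnd : n ≠ d) (hn2d : n ≠ 2 * d)
    (h : ∃ (a b c : F) (G : Matrix (Fin n) (Fin n) F),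
      G.IsSymm ∧ (∀ i, G i i = a) ∧ (∀ i j, i ≠ j → (G i j) ^ 2 = b) ∧
      G * G = c • G ∧ G.rank = d)
    (hd : (d : ZMod p) ≠ 0) (hn1 : (n : ZMod p) ≠ 1) :
    (n : ZMod p) ≠ (d : ZMod p) ∧
    ∃ x : ZMod p, x ≠ 0 ∧
      x ^ 2 * ((n : ZMod p) - (d : ZMod p)) = (d : ZMod p) * ((n : ZMod p) - 1) := by
  classical
  haveI : Fact p.Prime := ⟨hp⟩
  obtain ⟨a, b, c, G, hsymm, hdiag, hoff, hGG, hrank⟩ := h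
  set i : ZMod p →+* F := ZMod.castHom (dvd_refl p) F with hidef
  have hi_inj : Function.Injective i := (ZMod.castHom (dvd_refl p) F).injective
  have hin : i (n : ZMod p) = (n : F) := _root_.map_natCast i n
  have hid : i (d : ZMod p) = (d : F) := _root_.map_natCast i d
  by_cases hn0 : (n : ZMod p) = 0
  · refine ⟨by rw [hn0]; exact fun h0 => hd h0.symm, 1, one_ne_zero, by rw [hn0]; ring⟩
  have hnF : (n : F) ≠ 0 := fun h0 => hn0 (hi_inj (by rw [hin, h0, _root_.map_zero]))
  have hdF : (d : F) ≠ 0 := fun h0 => hd (hi_inj (by rw [hid, h0, _root_.map_zero]))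
  have hn1F : (n : F) - 1 ≠ 0 := by
    intro h0
    exact hn1 (hi_inj (by rw [hin, sub_eq_zero.1 h0, _root_.map_one]))
  have h2n : 2 ≤ n := by
    rcases Nat.lt_or_ge n 2 with h' | h'
    · interval_cases n
      · exact absurd (by simp) hn0
      · exact absurd (by simp) hn1
    · exact h'
  set i0 : Fin n := ⟨0, by omega⟩ with hi0
  set j0 : Fin n := ⟨1, by omega⟩ with hj0
  have hij : i0 ≠ j0 := by simp [hi0, hj0, Fin.ext_iff]
  have hGsym : ∀ k l : Fin n, G l k = G k l := fun k l => hsymm.apply k l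
  -- the basic diagonal identity
  have key1 : c * a = a ^ 2 + ((n : F) - 1) * b := by
    have h1 : (G * G) i0 i0 = (c • G) i0 i0 := by rw [hGG]
    rw [Matrix.mul_apply, Matrix.smul_apply, hdiag, smul_eq_mul] at h1
    have hsum : ∑ j, G i0 j * G j i0 = a ^ 2 + ((n : F) - 1) * b := by
      calc ∑ j, G i0 j * G j i0 = ∑ j, (G i0 j) ^ 2 :=
            Finset.sum_congr rfl fun j _ => by rw [hGsym i0 j, sq]
      _ = (G i0 i0) ^ 2 + ∑ j ∈ Finset.univ.erase i0, (G i0 j) ^ 2 :=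
            (Finset.add_sum_erase _ _ (Finset.mem_univ i0)).symm
      _ = a ^ 2 + ((n : F) - 1) * b := by
            rw [hdiag]
            congr 1
            rw [Finset.sum_congr rfl (fun j hj =>
              hoff i0 j (Ne.symm (Finset.ne_of_mem_erase hj)))]
            rw [Finset.sum_const, Finset.card_erase_of_mem (Finset.mem_univ _),
              Finset.card_univ, Fintype.card_fin, nsmul_eq_mul, Nat.cast_sub (by omega),
              Nat.cast_one]
    rw [hsum] at h1
    exact h1.symm
  -- b is nonzero
  have hb : b ≠ 0 := by
    intro hb0
    have hG0 : ∀ k l, k ≠ l → G k l = 0 := fun k l hkl => by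
      have h0 := hoff k l hkl
      rw [hb0, pow_eq_zero_iff (two_ne_zero)] at h0
      exact h0
    have hGd : G = a • (1 : Matrix (Fin n) (Fin n) F) := by
      ext k l
      by_cases hkl : k = l
      · subst hkl; simp [hdiag, Matrix.one_apply]
      · simp [hG0 k l hkl, Matrix.one_apply, hkl]
    rcases eq_or_ne a 0 with ha0 | ha0
    · have h0 := hrank
      rw [hGd, ha0, zero_smul, Matrix.rank_zero] at h0
      exact hd (by simp [← h0])
    · have h0 : G.rank = n := by
        have hu : IsUnit (a • (1 : Matrix (Fin n) (Fin n) F)).det := by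
          rw [Matrix.det_smul, Matrix.det_one, mul_one]
          exact isUnit_iff_ne_zero.2 (pow_ne_zero _ ha0)
        rw [hGd, Matrix.rank_of_isUnit _ ((Matrix.isUnit_iff_isUnit_det _).2 hu),
          Fintype.card_fin]
      exact hnd (by rw [← h0, hrank])
  -- the normalizing scalar t
  set t : F := G i0 j0 with htdef
  have ht2 : t ^ 2 = b := hoff i0 j0 hij
  have ht : t ≠ 0 := fun h0 => hb (by rw [← ht2, h0]; ring)
  -- the sign matrix S
  set S : Matrix (Fin n) (Fin n) F := t⁻¹ • (G - a • 1) with hSdef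
  have hG' : G = a • 1 + t • S := by
    rw [hSdef, smul_smul, mul_inv_cancel₀ ht, one_smul]
    abel
  have hSdiag : ∀ k, S k k = 0 := fun k => by
    simp [hSdef, Matrix.sub_apply, Matrix.smul_apply, Matrix.one_apply, hdiag]
  have hSoff : ∀ k l, k ≠ l → S k l = t⁻¹ * G k l := fun k l hkl => by
    simp [hSdef, Matrix.sub_apply, Matrix.smul_apply, Matrix.one_apply, hkl]
  have hS_range : ∀ k l, ∃ z : ZMod p, i z = S k l := by
    intro k l
    by_cases hkl : k = l
    · subst hkl; exact ⟨0, by rw [_root_.map_zero, hSdiag]⟩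
    · have h1 : (S k l) ^ 2 = 1 := by
        rw [hSoff k l hkl, mul_pow, hoff k l hkl, ← ht2]
        field_simp
      have h2 : (S k l - 1) * (S k l + 1) = 0 := by linear_combination h1
      rcases mul_eq_zero.1 h2 with h0 | h0
      · exact ⟨1, by rw [_root_.map_one, ← sub_eq_zero.1 h0]⟩
      · exact ⟨-1, by rw [map_neg, _root_.map_one, eq_neg_of_add_eq_zero_left h0]⟩
  have hSfix : ∀ k l, (S k l) ^ p = S k l := by
    intro k l
    obtain ⟨z, hz⟩ := hS_range k l
    rw [← hz, ← _root_.map_pow, ZMod.pow_card]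
  have hS1 : S i0 j0 = 1 := by
    rw [hSoff i0 j0 hij, ← htdef, inv_mul_cancel₀ ht]
  have htS : t • S = G - a • 1 := by
    rw [hSdef, smul_smul, mul_inv_cancel₀ ht, one_smul]
  clear_value S t
  -- the quadratic relation
  set μ : F := (c - 2 * a) * t⁻¹ with hμdef
  clear_value μ
  have hSq : S * S = ((n : F) - 1) • (1 : Matrix (Fin n) (Fin n) F) + μ • S := by
    have e1 : (t • S) * (t • S) = (c - 2 * a) • G + (a * a) • (1 : Matrix (Fin n) (Fin n) F) := by
      have c0 : (a • (1 : Matrix (Fin n) (Fin n) F)) * (a • (1 : Matrix (Fin n) (Fin n) F))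
          = (a * a) • (1 : Matrix (Fin n) (Fin n) F) := by
        rw [Matrix.smul_mul, one_mul, smul_smul]
      rw [htS, sub_mul, mul_sub, mul_sub, hGG, c0, Matrix.mul_smul, mul_one, Matrix.smul_mul,
        one_mul]
      module
    have e2 : (t • S) * (t • S) = (t * t) • (S * S) := by
      rw [Matrix.smul_mul, Matrix.mul_smul, smul_smul]
    have hcoef : (c - 2 * a) * a + a * a = ((n : F) - 1) * (t * t) := by
      linear_combination key1 - ((n : F) - 1) * ht2
    have e3 : (c - 2 * a) • G + (a * a) • (1 : Matrix (Fin n) (Fin n) F)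
        = (((n : F) - 1) * (t * t)) • (1 : Matrix (Fin n) (Fin n) F) + ((c - 2 * a) * t) • S := by
      rw [hG', ← hcoef]
      module
    have e4 : S * S = (t * t)⁻¹ • ((((n : F) - 1) * (t * t)) • (1 : Matrix (Fin n) (Fin n) F)
        + ((c - 2 * a) * t) • S) := by
      rw [← e3, ← e1, e2, smul_smul, inv_mul_cancel₀ (mul_ne_zero ht ht), one_smul]
    rw [e4, smul_add, smul_smul, smul_smul]
    congr 2
    · field_simp
    · rw [hμdef]; field_simp
  -- μ lies in the prime field
  have hμmem : μ ∈ i.range := by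
    have h1 : (S * S) i0 j0 = μ := by
      rw [hSq, Matrix.add_apply, Matrix.smul_apply, Matrix.smul_apply,
        Matrix.one_apply_ne hij, hS1, smul_eq_mul, smul_eq_mul, mul_one, mul_zero, zero_add]
    rw [← h1, Matrix.mul_apply]
    apply Subring.sum_mem
    intro k _
    exact Subring.mul_mem _ (RingHom.mem_range.2 (hS_range i0 k))
      (RingHom.mem_range.2 (hS_range k j0))
  obtain ⟨μ0, hμ0⟩ := RingHom.mem_range.1 hμmem
  -- trace of G
  have htrG : Matrix.trace G = (n : F) * a := by
    simp only [Matrix.trace, Matrix.diag]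
    rw [Finset.sum_congr rfl (fun k _ => hdiag k), Finset.sum_const, Finset.card_univ,
      Fintype.card_fin, nsmul_eq_mul]
  -- c is nonzero
  have hc0 : c ≠ 0 := by
    intro hc
    have hGG0 : G * G = 0 := by rw [hGG, hc, zero_smul]
    have hnil : IsNilpotent G := ⟨2, by rw [pow_two, hGG0]⟩
    have htr0 : Matrix.trace G = 0 := (Matrix.isNilpotent_trace_of_isNilpotent hnil).eq_zero
    rw [htrG] at htr0
    have ha0 : a = 0 := by
      rcases mul_eq_zero.1 htr0 with h0 | h0
      · exact absurd h0 hnF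
      · exact h0
    have hb0 : ((n : F) - 1) * b = 0 := by
      rw [hc, ha0] at key1
      linear_combination -key1
    rcases mul_eq_zero.1 hb0 with h0 | h0
    · exact hn1F h0
    · exact hb h0
  -- trace identity:  n a = c d
  have hP : (c⁻¹ • G) * (c⁻¹ • G) = c⁻¹ • G := by
    rw [Matrix.smul_mul, Matrix.mul_smul, smul_smul, hGG, smul_smul]
    congr 1
    field_simp
  have hPrank : (c⁻¹ • G).rank = d := by
    have hdg : c⁻¹ • G = (Matrix.diagonal fun _ : Fin n => c⁻¹) * G := by
      ext k l
      rw [Matrix.smul_apply, Matrix.diagonal_mul, smul_eq_mul]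
    have hdet : IsUnit (Matrix.diagonal fun _ : Fin n => c⁻¹).det := by
      rw [Matrix.det_diagonal, Finset.prod_const]
      exact isUnit_iff_ne_zero.2 (pow_ne_zero _ (inv_ne_zero hc0))
    rw [hdg, Matrix.rank_mul_eq_right_of_isUnit_det _ _ hdet, hrank]
  have hna : (n : F) * a = c * (d : F) := by
    have htrP := trace_idem _ hP
    rw [Matrix.trace_smul, htrG, hPrank, smul_eq_mul] at htrP
    field_simp at htrP
    linear_combination htrP
  -- the key quadratic consequence
  have key2 : a ^ 2 * ((n : F) - (d : F)) = (d : F) * ((n : F) - 1) * (t * t) := by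
    linear_combination a * hna + (d : F) * key1 - (d : F) * ((n : F) - 1) * ht2
  have ha : a ≠ 0 := by
    intro h0
    rw [h0] at key2
    have h1 : (d : F) * ((n : F) - 1) * (t * t) = 0 := by linear_combination -key2
    rcases mul_eq_zero.1 h1 with h2 | h2
    · rcases mul_eq_zero.1 h2 with h3 | h3
      exacts [hdF h3, hn1F h3]
    · exact ht (mul_self_eq_zero.1 h2)
  have hndF : (n : F) - (d : F) ≠ 0 := by
    intro h0
    rw [h0, mul_zero] at key2
    have h1 : (d : F) * ((n : F) - 1) * (t * t) = 0 := by linear_combination -key2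
    rcases mul_eq_zero.1 h1 with h2 | h2
    · rcases mul_eq_zero.1 h2 with h3 | h3
      exacts [hdF h3, hn1F h3]
    · exact ht (mul_self_eq_zero.1 h2)
  have part1 : (n : ZMod p) ≠ (d : ZMod p) := by
    intro h0
    exact hndF (by rw [← hin, ← hid, ← _root_.map_sub, h0, sub_self, _root_.map_zero])
  -- the candidate square root
  set y : F := a * t⁻¹ with hydef
  clear_value y
  have hy : y ≠ 0 := by rw [hydef]; exact mul_ne_zero ha (inv_ne_zero ht)
  have hy2 : y ^ 2 * ((n : F) - (d : F)) = (d : F) * ((n : F) - 1) := by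
    rw [hydef]
    field_simp
    linear_combination key2
  set w : ZMod p := (d : ZMod p) * ((n : ZMod p) - 1) * ((n : ZMod p) - (d : ZMod p))⁻¹
    with hwdef
  clear_value w
  have hw : i w = y ^ 2 := by
    rw [hwdef, _root_.map_mul, _root_.map_mul, _root_.map_sub, _root_.map_inv₀,
      _root_.map_sub, _root_.map_one, hin, hid]
    rw [mul_inv_eq_iff_eq_mul₀ hndF]
    linear_combination -hy2
  by_cases hyr : ∃ z : ZMod p, i z = y
  · obtain ⟨z, hz⟩ := hyr
    refine ⟨part1, z, fun h0 => hy (by rw [← hz, h0, _root_.map_zero]), ?_⟩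
    apply hi_inj
    rw [_root_.map_mul, _root_.map_sub, _root_.map_pow, _root_.map_mul, _root_.map_sub,
      _root_.map_one, hin, hid, hz]
    exact hy2
  exfalso
  have hquad : y ^ 2 + μ * y = (n : F) - 1 := by
    rw [hydef, hμdef]
    field_simp
    linear_combination key1 - ((n : F) - 1) * ht2
  -- μ must vanish
  have hμ0eq : μ = 0 := by
    by_contra hμne
    apply hyr
    have hμ0ne : μ0 ≠ 0 := fun h0 => hμne (by rw [← hμ0, h0, _root_.map_zero])
    refine ⟨(((n : ZMod p) - 1) - w) * μ0⁻¹, ?_⟩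
    rw [_root_.map_mul, _root_.map_sub, _root_.map_sub, _root_.map_one, _root_.map_inv₀,
      hin, hw, hμ0]
    rw [mul_inv_eq_iff_eq_mul₀ hμne]
    linear_combination -hquad
  -- Frobenius sends y to -y
  have hyp2 : (y ^ p) ^ 2 = y ^ 2 := by
    rw [← pow_mul, mul_comm, pow_mul, ← hw, ← _root_.map_pow, ZMod.pow_card, hw]
  have hypy : y ^ p ≠ y := fun h0 => hyr (mem_prime_field y h0)
  have hyp : y ^ p = -y := by
    have h1 : (y ^ p - y) * (y ^ p + y) = 0 := by linear_combination hyp2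
    rcases mul_eq_zero.1 h1 with h0 | h0
    · exact absurd (sub_eq_zero.1 h0) hypy
    · exact eq_neg_of_add_eq_zero_left h0
  -- set up the two matrices
  haveI : ExpChar F p := ExpChar.prime hp
  set φ : F ≃+* F := frobeniusEquiv F p with hφdef
  have hφ : ∀ x : F, φ x = x ^ p := fun x => rfl
  set M1 : Matrix (Fin n) (Fin n) F := S + y • 1 with hM1
  set M2 : Matrix (Fin n) (Fin n) F := S - y • 1 with hM2
  clear_value M1 M2
  have hmap : M1.map φ = M2 := by
    ext k l
    rw [Matrix.map_apply, hM1, hM2, Matrix.add_apply, Matrix.sub_apply]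
    by_cases hkl : k = l
    · subst hkl
      rw [Matrix.smul_apply, Matrix.one_apply_eq, smul_eq_mul, mul_one, _root_.map_add, hφ, hφ, hSfix, hyp]
      ring
    · rw [Matrix.smul_apply, Matrix.one_apply_ne hkl, smul_zero, add_zero, sub_zero, hφ, hSfix]
  have hrank1 : M1.rank = d := by
    have hty : t * y = a := by rw [hydef]; field_simp
    have hGt : G = t • M1 := by
      rw [hM1, smul_add, smul_smul, hty, hG']
      abel
    have hdg : t • M1 = (Matrix.diagonal fun _ : Fin n => t) * M1 := by
      ext k l
      rw [Matrix.smul_apply, Matrix.diagonal_mul, smul_eq_mul]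
    have hdet : IsUnit (Matrix.diagonal fun _ : Fin n => t).det := by
      rw [Matrix.det_diagonal, Finset.prod_const]
      exact isUnit_iff_ne_zero.2 (pow_ne_zero _ ht)
    have h0 := hrank
    rw [hGt, hdg, Matrix.rank_mul_eq_right_of_isUnit_det _ _ hdet] at h0
    exact h0
  have hrank2 : M2.rank = d := by
    rw [← hmap, rank_map_ringEquiv, hrank1]
  -- M1 * M2 = 0
  have hy2n : y ^ 2 = (n : F) - 1 := by
    rw [← hquad, hμ0eq]; ring
  have hyy : y * y = (n : F) - 1 := by rw [← hy2n]; ring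
  have hmul0 : M1 * M2 = 0 := by
    have c1 : S * (y • (1 : Matrix (Fin n) (Fin n) F)) = y • S := by
      rw [Matrix.mul_smul, mul_one]
    have c2 : (y • (1 : Matrix (Fin n) (Fin n) F)) * S = y • S := by
      rw [Matrix.smul_mul, one_mul]
    have c3 : (y • (1 : Matrix (Fin n) (Fin n) F)) * (y • (1 : Matrix (Fin n) (Fin n) F))
        = (y * y) • (1 : Matrix (Fin n) (Fin n) F) := by
      rw [Matrix.smul_mul, one_mul, smul_smul]
    rw [hM1, hM2, add_mul, mul_sub, mul_sub, c1, c2, c3, hSq, hμ0eq, zero_smul, add_zero, hyy]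
    abel
  have hrankle : M1.rank + M2.rank ≤ n := by
    have h0 := Matrix.rank_add_rank_le_card_of_mul_eq_zero hmul0
    rwa [Fintype.card_fin] at h0
  -- kernels are disjoint
  have h2F : (2 : F) ≠ 0 := by
    intro h0
    have hp2 : p = 2 := (Nat.prime_dvd_prime_iff_eq hp Nat.prime_two).1
      ((CharP.cast_eq_zero_iff F p 2).1 h0)
    rw [hp2] at hodd
    exact (by norm_num : ¬ Odd 2) hodd
  have hM12 : M1 - M2 = (2 * y) • (1 : Matrix (Fin n) (Fin n) F) := by
    rw [hM1, hM2]
    module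
  have hdisj : LinearMap.ker M1.mulVecLin ⊓ LinearMap.ker M2.mulVecLin = ⊥ := by
    rw [Submodule.eq_bot_iff]
    intro v hv
    obtain ⟨hv1, hv2⟩ := Submodule.mem_inf.1 hv
    rw [LinearMap.mem_ker, Matrix.mulVecLin_apply] at hv1 hv2
    have h3 : (2 * y) • v = 0 := by
      have h4 : (M1 - M2) *ᵥ v = 0 := by rw [Matrix.sub_mulVec, hv1, hv2, sub_zero]
      rwa [hM12, Matrix.smul_mulVec, Matrix.one_mulVec] at h4
    exact (smul_eq_zero.1 h3).resolve_left (mul_ne_zero h2F hy)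
  have hk1 : M1.rank + Module.finrank F (LinearMap.ker M1.mulVecLin) = n := by
    have h0 := LinearMap.finrank_range_add_finrank_ker M1.mulVecLin
    rwa [Module.finrank_fin_fun] at h0
  have hk2 : M2.rank + Module.finrank F (LinearMap.ker M2.mulVecLin) = n := by
    have h0 := LinearMap.finrank_range_add_finrank_ker M2.mulVecLin
    rwa [Module.finrank_fin_fun] at h0
  have hsup := Submodule.finrank_sup_add_finrank_inf_eq (LinearMap.ker M1.mulVecLin)
    (LinearMap.ker M2.mulVecLin)
  rw [hdisj, finrank_bot, add_zero] at hsup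
  have hle := Submodule.finrank_le (LinearMap.ker M1.mulVecLin ⊔ LinearMap.ker M2.mulVecLin)
  rw [Module.finrank_fin_fun] at hle
  omega
end

section
/- Let p be an odd prime, F a finite field of characteristic p with canonical ring homomorphism φ : ZMod p → F, let v ≥ 1, n = v + 1, and let Γ be a simple graph on Fin v with Seidel matrix Σ over F. Form the n×n block matrix S = [[0, 𝟙ᵀ],[𝟙, Σ]] over F (border Σ with a zero diagonal entry and an all-ones row and column). Then the following are equivalent: (1) there exist a, c ∈ F with (S + a·I)² = c·(S + a·I) (equivalently, S + a·I is the Gram matrix of an (a,1,c)-ETF of n vectors in an orthogonal geometry of dimension rank(S + a·I) over F); (2) there exist k, λ, μ ∈ ZMod p such that the adjacency matrix A of Γ over ZMod p satisfies A² = μ·J + (λ−μ)·A + (k−μ)·I, k = 2μ, (v : ZMod p) = 3k − 2λ − 1, and there exists δ ∈ F with δ² = φ((λ−μ)² + 4(k−μ)). -/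
open Matrix Finset

/-- The Seidel adjacency matrix `Σ = J - 2A - I` of a simple graph, over a ring `R`. -/
def seidel {v : ℕ} (R : Type*) [Ring R] (Γ : SimpleGraph (Fin v)) [DecidableRel Γ.Adj] :
    Matrix (Fin v) (Fin v) R :=
  Matrix.of (fun _ _ => (1 : R)) - 2 • Γ.adjMatrix R - 1

/-- The bordered matrix `S = [[0, 𝟙ᵀ],[𝟙, Σ]]` obtained from a `v × v` matrix `Σ`. -/
def border {v : ℕ} {R : Type*} [Zero R] [One R]
    (S : Matrix (Fin v) (Fin v) R) : Matrix (Fin (v + 1)) (Fin (v + 1)) R :=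
  Matrix.of fun i j =>
    if hi : i = 0 then (if j = 0 then (0 : R) else 1)
    else if hj : j = 0 then 1 else S (i.pred hi) (j.pred hj)

section aux

variable {n : ℕ} {R : Type*} [CommRing R] (S : Matrix (Fin n) (Fin n) R) (a : R)

lemma M00 : (border S + a • 1) 0 0 = a := by
  simp [border]

lemma M0s (j : Fin n) : (border S + a • 1) 0 j.succ = 1 := by
  simp [border, Matrix.one_apply, (Fin.succ_ne_zero j).symm, Fin.succ_ne_zero]

lemma Ms0 (i : Fin n) : (border S + a • 1) i.succ 0 = 1 := by
  simp [border, Matrix.one_apply, (Fin.succ_ne_zero i).symm, Fin.succ_ne_zero]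

lemma Mss (i j : Fin n) : (border S + a • 1) i.succ j.succ = S i j + if i = j then a else 0 := by
  simp [border, Matrix.one_apply, Fin.succ_ne_zero, Fin.succ_inj, mul_ite]

lemma MsqOO : ((border S + a • 1) * (border S + a • 1)) 0 0 = a * a + n := by
  rw [Matrix.mul_apply, Fin.sum_univ_succ]
  simp only [M00, M0s, Ms0, one_mul]
  simp

lemma MsqOs (j : Fin n) :
    ((border S + a • 1) * (border S + a • 1)) 0 j.succ = 2 * a + ∑ i, S i j := by
  rw [Matrix.mul_apply, Fin.sum_univ_succ]
  simp only [M00, M0s, Ms0, Mss, one_mul]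
  rw [Finset.sum_add_distrib, Finset.sum_ite_eq' Finset.univ j (fun _ => a)]
  simp; ring

lemma MsqsO (i : Fin n) :
    ((border S + a • 1) * (border S + a • 1)) i.succ 0 = 2 * a + ∑ j, S i j := by
  rw [Matrix.mul_apply, Fin.sum_univ_succ]
  simp only [M00, M0s, Ms0, Mss, mul_one]
  rw [Finset.sum_add_distrib, Finset.sum_ite_eq Finset.univ i (fun _ => a)]
  simp; ring

lemma Msqss (i j : Fin n) :
    ((border S + a • 1) * (border S + a • 1)) i.succ j.succ =
      1 + (∑ k, S i k * S k j) + 2 * a * S i j + (if i = j then a * a else 0) := by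
  rw [Matrix.mul_apply, Fin.sum_univ_succ]
  simp only [M0s, Ms0, Mss, one_mul, mul_one]
  have : ∀ k : Fin n, (S i k + if i = k then a else 0) * (S k j + if k = j then a else 0)
      = S i k * S k j + (if k = j then S i k * a else 0) + (if i = k then a * S k j else 0)
        + (if i = k then (if k = j then a * a else 0) else 0) := by
    intro k
    split_ifs <;> ring
  rw [Finset.sum_congr rfl fun k _ => this k]
  rw [Finset.sum_add_distrib, Finset.sum_add_distrib, Finset.sum_add_distrib,
    Finset.sum_ite_eq' Finset.univ j (fun k => S i k * a),
    Finset.sum_ite_eq Finset.univ i (fun k => a * S k j),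
    Finset.sum_ite_eq Finset.univ i (fun k => if k = j then a * a else 0)]
  simp; ring

lemma border_sq_iff (c : R) :
    (border S + a • 1) * (border S + a • 1) = c • (border S + a • 1) ↔
      (a * a + n = c * a) ∧ (∀ j, 2 * a + ∑ i, S i j = c) ∧ (∀ i, 2 * a + ∑ j, S i j = c) ∧
      (S * S + (2 * a) • S + Matrix.of (fun _ _ => (1 : R)) + (a * a) • 1
        = c • S + (c * a) • 1) := by
  constructor
  · intro h
    have h' : ∀ i j, ((border S + a • 1) * (border S + a • 1)) i j
        = (c • (border S + a • 1)) i j := fun i j => by rw [h]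
    refine ⟨?_, ?_, ?_, ?_⟩
    · have := h' 0 0
      rwa [MsqOO, Matrix.smul_apply, M00, smul_eq_mul] at this
    · intro j
      have := h' 0 j.succ
      rwa [MsqOs, Matrix.smul_apply, M0s, smul_eq_mul, mul_one] at this
    · intro i
      have := h' i.succ 0
      rwa [MsqsO, Matrix.smul_apply, Ms0, smul_eq_mul, mul_one] at this
    · ext i j
      have := h' i.succ j.succ
      rw [Msqss, Matrix.smul_apply, Mss, smul_eq_mul] at this
      simp only [Matrix.add_apply, Matrix.smul_apply, Matrix.mul_apply, Matrix.one_apply,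
        Matrix.of_apply, smul_eq_mul]
      split_ifs at this ⊢ with hij <;> linear_combination this
  · rintro ⟨h1, h2, h3, h4⟩
    have h4' : ∀ i j, (∑ k, S i k * S k j) + 2 * a * S i j + 1 + (if i = j then a * a else 0)
        = c * S i j + (if i = j then c * a else 0) := by
      intro i j
      have := congrFun (congrFun h4 i) j
      simpa [Matrix.add_apply, Matrix.smul_apply, Matrix.mul_apply, Matrix.one_apply,
        mul_ite, mul_zero] using this
    ext i j
    induction i using Fin.cases with
    | zero =>
      induction j using Fin.cases with
      | zero => rw [MsqOO, Matrix.smul_apply, M00, smul_eq_mul]; exact h1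
      | succ j => rw [MsqOs, Matrix.smul_apply, M0s, smul_eq_mul, mul_one]; exact h2 j
    | succ i =>
      induction j using Fin.cases with
      | zero => rw [MsqsO, Matrix.smul_apply, Ms0, smul_eq_mul, mul_one]; exact h3 i
      | succ j =>
        rw [Msqss, Matrix.smul_apply, Mss, smul_eq_mul]
        have := h4' i j
        split_ifs at this ⊢ with hij <;> linear_combination this

end aux

section graph

variable {n : ℕ} {R : Type*} [CommRing R] (Γ : SimpleGraph (Fin n)) [DecidableRel Γ.Adj]

lemma adj_rowsum (i : Fin n) : ∑ j, Γ.adjMatrix R i j = (Γ.degree i : R) := by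
  simp [SimpleGraph.degree, SimpleGraph.neighborFinset_eq_filter, Finset.sum_boole]

lemma adj_colsum (j : Fin n) : ∑ i, Γ.adjMatrix R i j = (Γ.degree j : R) := by
  simp [SimpleGraph.degree, SimpleGraph.neighborFinset_eq_filter, Finset.sum_boole,
    SimpleGraph.adj_comm]

lemma seidel_two_smul : seidel R Γ = Matrix.of (fun _ _ => (1 : R)) - (2 : R) • Γ.adjMatrix R - 1 := by
  rw [seidel]
  congr 1
  congr 1
  rw [← Nat.cast_smul_eq_nsmul R 2 (Γ.adjMatrix R)]
  norm_num

lemma seidel_apply (i j : Fin n) :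
    seidel R Γ i j = 1 - 2 * Γ.adjMatrix R i j - (if i = j then 1 else 0) := by
  rw [seidel_two_smul]
  simp only [Matrix.sub_apply, Matrix.smul_apply, Matrix.of_apply, Matrix.one_apply, smul_eq_mul]

lemma seidel_rowsum (i : Fin n) :
    ∑ j, seidel R Γ i j = (n : R) - 2 * (Γ.degree i : R) - 1 := by
  simp only [seidel, Matrix.sub_apply, Matrix.smul_apply, Matrix.of_apply, Matrix.one_apply]
  rw [Finset.sum_sub_distrib, Finset.sum_sub_distrib,
    Finset.sum_ite_eq Finset.univ i (fun _ => (1 : R)), ← Finset.smul_sum, adj_rowsum Γ i]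
  simp [nsmul_eq_mul]

lemma seidel_colsum (j : Fin n) :
    ∑ i, seidel R Γ i j = (n : R) - 2 * (Γ.degree j : R) - 1 := by
  simp only [seidel, Matrix.sub_apply, Matrix.smul_apply, Matrix.of_apply, Matrix.one_apply]
  rw [Finset.sum_sub_distrib, Finset.sum_sub_distrib,
    Finset.sum_ite_eq' Finset.univ j (fun _ => (1 : R)), ← Finset.smul_sum, adj_colsum Γ j]
  simp [nsmul_eq_mul]

lemma seidel_sq_expand (k : R) (hreg : ∀ i, (Γ.degree i : R) = k) :
    seidel R Γ * seidel R Γ =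
      (4 : R) • (Γ.adjMatrix R * Γ.adjMatrix R)
        + ((n : R) - 4 * k - 2) • Matrix.of (fun _ _ => (1 : R))
        + (4 : R) • Γ.adjMatrix R + 1 := by
  set A := Γ.adjMatrix R with hA
  set J : Matrix (Fin n) (Fin n) R := Matrix.of (fun _ _ => (1 : R)) with hJ
  have hJJ : J * J = (n : R) • J := by
    ext i j
    simp [hJ, Matrix.mul_apply, Finset.card_univ]
  have hAJ : A * J = k • J := by
    ext i j
    simp only [Matrix.mul_apply, hJ, Matrix.of_apply, mul_one, Matrix.smul_apply, smul_eq_mul]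
    rw [adj_rowsum Γ i, hreg]
  have hJA : J * A = k • J := by
    ext i j
    simp only [Matrix.mul_apply, hJ, Matrix.of_apply, one_mul, Matrix.smul_apply, smul_eq_mul]
    rw [adj_colsum Γ j, hreg]; ring
  rw [seidel_two_smul, ← hA, ← hJ]
  simp only [sub_mul, mul_sub, one_mul, mul_one, smul_mul_assoc, mul_smul_comm, hJJ, hAJ, hJA,
    smul_smul]
  module

lemma seidel_sq_srg (k l m : R)
    (hA : Γ.adjMatrix R * Γ.adjMatrix R =
      m • Matrix.of (fun _ _ => (1 : R)) + (l - m) • Γ.adjMatrix R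
        + (k - m) • (1 : Matrix (Fin n) (Fin n) R))
    (hreg : ∀ i, (Γ.degree i : R) = k)
    (hk : k = 2 * m) (hv : (n : R) = 3 * k - 2 * l - 1) :
    seidel R Γ * seidel R Γ =
      (2 * m - 2 * l - 2) • seidel R Γ + (n : R) • (1 : Matrix (Fin n) (Fin n) R)
        - Matrix.of (fun _ _ => (1 : R)) := by
  rw [seidel_sq_expand Γ k hreg, hA, seidel_two_smul, hv, hk]
  module

end graph

/-- Seidel's theorem mod p: with `S = [[0, 𝟙ᵀ],[𝟙, Σ]]` over a finite field `F` of odd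
characteristic `p`, some `S + aI` is the Gram matrix of an `(a,1,c)`-ETF (i.e. satisfies
`(S+aI)² = c(S+aI)`) iff `Γ` is a `(v,k,λ,μ)`-SRG_p with `k = 2μ`, `v ≡ 3k - 2λ - 1`,
and `(λ-μ)² + 4(k-μ)` becomes a square in `F`. -/
theorem stmt_8 (p : ℕ) (hp : p.Prime) (hodd : Odd p)
    (F : Type) [Field F] [Fintype F] [CharP F p] (φ : ZMod p →+* F)
    (v : ℕ) (hv : 1 ≤ v) (Γ : SimpleGraph (Fin v)) [DecidableRel Γ.Adj] :
    (∃ a c : F,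
        (border (seidel F Γ) + a • 1) * (border (seidel F Γ) + a • 1)
          = c • (border (seidel F Γ) + a • 1)) ↔
    (∃ k l m : ZMod p,
        Γ.adjMatrix (ZMod p) * Γ.adjMatrix (ZMod p) =
          m • Matrix.of (fun _ _ => (1 : ZMod p)) + (l - m) • Γ.adjMatrix (ZMod p)
            + (k - m) • (1 : Matrix (Fin v) (Fin v) (ZMod p)) ∧
        k = 2 * m ∧
        (v : ZMod p) = 3 * k - 2 * l - 1 ∧
        ∃ δ : F, δ ^ 2 = φ ((l - m) ^ 2 + 4 * (k - m))) := by
  haveI : Fact p.Prime := ⟨hp⟩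
  have hp2 : p ≠ 2 := by rintro rfl; simp [Nat.odd_iff] at hodd
  have hpdvd : ¬ (p ∣ 2) := fun h => hp2 ((Nat.prime_dvd_prime_iff_eq hp Nat.prime_two).mp h)
  have h2p : (2 : ZMod p) ≠ 0 := by
    intro h
    apply hpdvd
    rwa [show ((2 : ZMod p)) = ((2 : ℕ) : ZMod p) by norm_num, ZMod.natCast_eq_zero_iff] at h
  have h2F : (2 : F) ≠ 0 := by
    intro h
    apply hpdvd
    rw [show ((2 : F)) = ((2 : ℕ) : F) by norm_num] at h
    exact (CharP.cast_eq_zero_iff F p 2).mp h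
  have hφ : Function.Injective φ := φ.injective
  have hAmap : ∀ i j, φ (Γ.adjMatrix (ZMod p) i j) = Γ.adjMatrix F i j := by
    intro i j; simp [apply_ite φ]
  have hdegF : ∀ i : Fin v, (Γ.degree i : F) = φ ((Γ.degree i : ZMod p)) := fun i =>
    (map_natCast φ _).symm
  have hSmap : ∀ i j, φ (seidel (ZMod p) Γ i j) = seidel F Γ i j := by
    intro i j
    simp only [seidel, Matrix.sub_apply, Matrix.smul_apply, Matrix.of_apply, Matrix.one_apply,
      _root_.map_sub, _root_.map_one, map_nsmul, apply_ite φ, _root_.map_zero, hAmap]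
  constructor
  · rintro ⟨a, c, h⟩
    rw [border_sq_iff] at h
    obtain ⟨h1, h2, h3, h4⟩ := h
    set j0 : Fin v := ⟨0, hv⟩ with hj0
    have hdegconst : ∀ j, (Γ.degree j : F) = (Γ.degree j0 : F) := by
      intro j
      have e1 := h2 j
      have e2 := h2 j0
      rw [seidel_colsum] at e1 e2
      have h' : (2 : F) * (Γ.degree j : F) = 2 * (Γ.degree j0 : F) := by
        linear_combination e2 - e1
      exact mul_left_cancel₀ h2F h'
    set k : ZMod p := ((Γ.degree j0 : ℕ) : ZMod p) with hkdef
    set kF := φ k with hkFdef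
    have hregF : ∀ i, (Γ.degree i : F) = kF := by
      intro i
      rw [hdegconst i, hdegF j0, hkFdef, hkdef]
    have hαval : c - 2 * a = (v : F) - 1 - 2 * kF := by
      have e := h2 j0
      rw [seidel_colsum, hregF j0] at e
      linear_combination -e
    have hS2 : seidel F Γ * seidel F Γ
        = (c - 2 * a) • seidel F Γ + (v : F) • (1 : Matrix (Fin v) (Fin v) F)
          - Matrix.of (fun _ _ => (1 : F)) := by
      have e : seidel F Γ * seidel F Γ
          = c • seidel F Γ + (c * a) • (1 : Matrix (Fin v) (Fin v) F) - (2 * a) • seidel F Γ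
            - Matrix.of (fun _ _ => (1 : F)) - (a * a) • (1 : Matrix (Fin v) (Fin v) F) := by
        rw [← h4]; abel
      rw [e, show c * a = (v : F) + a * a by linear_combination -h1]
      module
    have hexp := seidel_sq_expand Γ kF hregF
    have h4smul : (4 : F) • (Γ.adjMatrix F * Γ.adjMatrix F)
        = (c - 2 * a) • seidel F Γ + (v : F) • (1 : Matrix (Fin v) (Fin v) F)
          - Matrix.of (fun _ _ => (1 : F))
          - ((v : F) - 4 * kF - 2) • Matrix.of (fun _ _ => (1 : F))
          - (4 : F) • Γ.adjMatrix F - 1 := by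
      rw [← hS2, hexp]; abel
    have h4F : (4 : F) ≠ 0 := by
      intro hx
      have h22 : (2 : F) * 2 = 0 := by rw [show (2 : F) * 2 = 4 by norm_num, hx]
      rcases mul_eq_zero.mp h22 with h' | h' <;> exact h2F h'
    set m : ZMod p := k / 2 with hmdef
    set l : ZMod p := m + (2 * k - ((v : ℕ) : ZMod p) - 1) / 2 with hldef
    have hk2 : k = 2 * m := by rw [hmdef]; field_simp
    have hveq : ((v : ℕ) : ZMod p) = 3 * k - 2 * l - 1 := by
      rw [hldef, hmdef]; field_simp; ring
    have hm2 : 2 * φ m = kF := by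
      rw [hkFdef, ← map_ofNat φ 2, ← _root_.map_mul]
      exact congrArg φ hk2.symm
    have hkm2 : 2 * φ (k - m) = kF := by
      rw [hkFdef, ← map_ofNat φ 2, ← _root_.map_mul]
      exact congrArg φ (by linear_combination hk2)
    have hlm2 : 2 * φ (l - m) = 2 * kF - (v : F) - 1 := by
      have hz : (2 : ZMod p) * (l - m) = 2 * k - ((v : ℕ) : ZMod p) - 1 := by
        linear_combination hveq + hk2
      calc 2 * φ (l - m) = φ (2 * (l - m)) := by rw [_root_.map_mul, map_ofNat]
        _ = φ (2 * k - ((v : ℕ) : ZMod p) - 1) := congrArg φ hz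
        _ = 2 * kF - (v : F) - 1 := by
            rw [_root_.map_sub, _root_.map_sub, _root_.map_mul, map_ofNat, map_natCast φ v,
              _root_.map_one, hkFdef]
    refine ⟨k, l, m, ?_, hk2, hveq, ⟨c / 2, ?_⟩⟩
    · ext i j
      apply hφ
      have eL : φ ((Γ.adjMatrix (ZMod p) * Γ.adjMatrix (ZMod p)) i j)
          = (Γ.adjMatrix F * Γ.adjMatrix F) i j := by
        rw [Matrix.mul_apply, Matrix.mul_apply, map_sum]
        exact Finset.sum_congr rfl fun t _ => by rw [_root_.map_mul, hAmap, hAmap]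
      rw [eL]
      have eh := congrFun (congrFun h4smul i) j
      simp only [Matrix.add_apply, Matrix.sub_apply, Matrix.smul_apply, Matrix.of_apply,
        Matrix.one_apply, smul_eq_mul, seidel_apply] at eh
      rw [hαval] at eh
      apply mul_left_cancel₀ h4F
      simp only [Matrix.add_apply, Matrix.smul_apply, Matrix.of_apply, Matrix.one_apply,
        smul_eq_mul, _root_.map_add, _root_.map_mul, _root_.map_one, apply_ite φ,
        _root_.map_zero, hAmap]
      generalize hX : (SimpleGraph.adjMatrix F Γ * SimpleGraph.adjMatrix F Γ) i j = X at eh ⊢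
      generalize hx : SimpleGraph.adjMatrix F Γ i j = x at eh ⊢
      split_ifs at eh ⊢ with hij
      · linear_combination eh - 2 * hm2 - 2 * x * hlm2 - 2 * hkm2
      · linear_combination eh - 2 * hm2 - 2 * x * hlm2
    · have hcw : 2 * (c / 2) = c := by rw [mul_comm]; exact div_mul_cancel₀ c h2F
      have h1' := h1
      have hα' := hαval
      rw [← hcw] at h1' hα'
      rw [_root_.map_add, map_pow, _root_.map_mul, map_ofNat]
      apply mul_left_cancel₀ h4F
      linear_combination (-(2 * φ (l - m) + (2 * kF - (v : F) - 1))) * hlm2 - 8 * hkm2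
        - 4 * h1' + (2 * (c / 2) - 2 * a + (v : F) - 1 - 2 * kF) * hα'
  · rintro ⟨k, l, m, hA, hk, hveq, δ, hδ⟩
    have hreg : ∀ i, (Γ.degree i : ZMod p) = k := by
      intro i
      have h := congrFun (congrFun hA i) i
      rw [SimpleGraph.adjMatrix_mul_self_apply_self] at h
      simp only [Matrix.add_apply, Matrix.smul_apply, Matrix.of_apply, Matrix.one_apply,
        SimpleGraph.adjMatrix_apply, SimpleGraph.irrefl, if_true, if_false, if_pos rfl,
        smul_eq_mul, mul_one, mul_zero, ite_false] at h
      rw [h]; ring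
    have hSp := seidel_sq_srg Γ k l m hA hreg hk hveq
    have hSF : seidel F Γ * seidel F Γ =
        φ (2 * m - 2 * l - 2) • seidel F Γ + (v : F) • (1 : Matrix (Fin v) (Fin v) F)
          - Matrix.of (fun _ _ => (1 : F)) := by
      ext i j
      have h := congrArg φ (congrFun (congrFun hSp i) j)
      have e1 : (seidel F Γ * seidel F Γ) i j
          = φ ((seidel (ZMod p) Γ * seidel (ZMod p) Γ) i j) := by
        rw [Matrix.mul_apply, Matrix.mul_apply, map_sum]
        exact Finset.sum_congr rfl fun t _ => by rw [_root_.map_mul, hSmap, hSmap]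
      rw [e1, h]
      simp only [Matrix.add_apply, Matrix.sub_apply, Matrix.smul_apply, Matrix.of_apply,
        Matrix.one_apply, smul_eq_mul, _root_.map_add, _root_.map_sub, _root_.map_mul,
        _root_.map_one, apply_ite φ, _root_.map_zero, map_natCast, map_ofNat, hSmap]
    set α : F := φ (2 * m - 2 * l - 2) with hαdef
    set β : F := φ (m - l - 1) with hβdef
    have hαβ : α = 2 * β := by
      rw [hαdef, hβdef, show (2 * m - 2 * l - 2 : ZMod p) = 2 * (m - l - 1) by ring,
        _root_.map_mul, map_ofNat]
    set a : F := δ - β with hadef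
    set c : F := 2 * δ with hcdef
    have hc : c = α + 2 * a := by rw [hαβ, hadef, hcdef]; ring
    have key : a * (c - a) = (v : F) := by
      have e : a * (c - a) = δ ^ 2 - β ^ 2 := by rw [hadef, hcdef]; ring
      rw [e, hδ, hβdef, ← map_pow, ← _root_.map_sub, ← map_natCast φ v]
      congr 1
      rw [hk] at hveq ⊢
      rw [hveq]; ring
    have hz : (v : F) - 2 * φ k - 1 = α := by
      rw [hαdef, ← map_natCast φ v, ← map_ofNat φ 2, ← _root_.map_mul,
        show (1 : F) = φ 1 from (_root_.map_one φ).symm, ← _root_.map_sub, ← _root_.map_sub]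
      exact congrArg φ (by rw [hveq, hk]; ring)
    refine ⟨a, c, (border_sq_iff _ _ _).2 ⟨?_, ?_, ?_, ?_⟩⟩
    · linear_combination -key
    · intro j
      rw [seidel_colsum, hdegF j, hreg j, hz, hc]; ring
    · intro i
      rw [seidel_rowsum, hdegF i, hreg i, hz, hc]; ring
    · rw [hSF]
      have hca : c * a = (v : F) + a * a := by linear_combination key
      rw [hca, hc]
      module
end

section
/- Let p be an odd prime, F a finite field of characteristic p with canonical ring homomorphism φ : ZMod p → F, let v ≥ 2, and let Γ be a simple graph on Fin v with Seidel matrix Σ over F. Then the following are equivalent: (1) there exist a, c, θ ∈ F such that (Σ + a·I)² = c·(Σ + a·I) and (Σ + a·I) ·ᵥ 𝟙 = θ·𝟙 (equivalently, Σ + a·I is the Gram matrix of an (a,1,c)-ETF of v vectors having the all-ones vector as an eigenvector, i.e., with centroidal symmetry); (2) there exist k, λ, μ ∈ ZMod p such that the adjacency matrix A of Γ over ZMod p satisfies A² = μ·J + (λ−μ)·A + (k−μ)·I, (v : ZMod p) = 4k − 2λ − 2μ, and there exists δ ∈ F with δ² = φ((λ−μ)² + 4(k−μ)). -/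
open Matrix

lemma seidel_eq {v : ℕ} (F : Type*) [Field F] (Γ : SimpleGraph (Fin v)) [DecidableRel Γ.Adj]
    (a : F) :
    seidel F Γ + a • (1 : Matrix (Fin v) (Fin v) F)
      = Matrix.of (fun _ _ => (1:F)) - (2:F) • Γ.adjMatrix F + (a-1) • 1 := by
  unfold seidel; module

lemma rowsum {n : Type*} [Fintype n] [DecidableEq n] {F : Type*} [Field F]
    (A : Matrix n n F) (b : F) (i : n) :
    ((Matrix.of (fun _ _ => (1:F)) - (2:F)•A + b•1) *ᵥ (1 : n → F)) i
      = (Fintype.card n : F) - 2*(∑ x, A i x) + b := by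
  simp [mulVec, dotProduct, Matrix.sub_apply, Matrix.add_apply, one_apply, Finset.sum_sub_distrib,
    Finset.sum_add_distrib, Finset.mul_sum, Finset.sum_ite_eq]

lemma expand1 {n : Type*} [Fintype n] [DecidableEq n] {F : Type*} [Field F]
    (A J : Matrix n n F) (vF kF b : F) (hJJ : J*J = vF•J) (hAJ : A*J = kF•J)
    (hJA : J*A = kF•J) :
    (J - (2:F)•A + b•1) * (J - (2:F)•A + b•1)
      = (vF - 4*kF + 2*b)•J + (4:F)•(A*A) + (-(4*b))•A + (b^2)•1 := by
  simp only [sub_mul, mul_sub, add_mul, mul_add, smul_mul_assoc, mul_smul_comm, hJJ, hAJ,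
    hJA, mul_one, one_mul, smul_smul]
  match_scalars <;> ring

lemma adj_diag {n : Type*} [Fintype n] [DecidableEq n] {F : Type*} [Field F]
    (Γ : SimpleGraph n) [DecidableRel Γ.Adj] (i : n) :
    (Γ.adjMatrix F * Γ.adjMatrix F) i i = ∑ x, Γ.adjMatrix F i x := by
  rw [Matrix.mul_apply]
  refine Finset.sum_congr rfl fun x _ => ?_
  by_cases h : Γ.Adj i x
  · simp [h, Γ.adj_comm]
  · simp [h]

/-- Characterization of ETFs with centroidal symmetry: over a finite field `F` of odd
characteristic `p`, there exist `a, c, θ ∈ F` with `(Σ + aI)² = c(Σ + aI)` and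
`(Σ + aI) 𝟙 = θ 𝟙` iff `Γ` is a `(v,k,λ,μ)`-SRG_p with `v ≡ 4k - 2λ - 2μ (mod p)` and
`(λ-μ)² + 4(k-μ)` becomes a square in `F`. -/
theorem stmt_11 (p : ℕ) (hp : p.Prime) (hodd : Odd p)
    (F : Type) [Field F] [Fintype F] [CharP F p] (φ : ZMod p →+* F)
    (v : ℕ) (hv : 2 ≤ v) (Γ : SimpleGraph (Fin v)) [DecidableRel Γ.Adj] :
    (∃ a c θ : F,
        (seidel F Γ + a • 1) * (seidel F Γ + a • 1) = c • (seidel F Γ + a • 1) ∧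
        (seidel F Γ + a • 1) *ᵥ (1 : Fin v → F) = θ • 1) ↔
    (∃ k l m : ZMod p,
        Γ.adjMatrix (ZMod p) * Γ.adjMatrix (ZMod p) =
          m • Matrix.of (fun _ _ => (1 : ZMod p)) + (l - m) • Γ.adjMatrix (ZMod p)
            + (k - m) • (1 : Matrix (Fin v) (Fin v) (ZMod p)) ∧
        (v : ZMod p) = 4 * k - 2 * l - 2 * m ∧
        ∃ δ : F, δ ^ 2 = φ ((l - m) ^ 2 + 4 * (k - m))) := by
  haveI : Fact p.Prime := ⟨hp⟩
  have hp2 : p ≠ 2 := by rintro rfl; exact absurd hodd (by decide)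
  have hinj : Function.Injective φ := φ.injective
  have h2F : (2:F) ≠ 0 := by
    have hnd : ¬ (p ∣ 2) := fun h => hp2 ((Nat.prime_dvd_prime_iff_eq hp Nat.prime_two).mp h)
    exact fun h => hnd ((CharP.cast_eq_zero_iff F p 2).mp (by exact_mod_cast h))
  have h4F : (4:F) ≠ 0 := by
    have h44 : (4:F) = 2*2 := by norm_num
    rw [h44]; exact mul_ne_zero h2F h2F
  have h2p : (2 : ZMod p) ≠ 0 := by
    have hnd : ¬ (p ∣ 2) := fun h => hp2 ((Nat.prime_dvd_prime_iff_eq hp Nat.prime_two).mp h)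
    exact fun h => hnd ((ZMod.natCast_eq_zero_iff 2 p).mp (by exact_mod_cast h))
  have hJJF : (Matrix.of (fun (_ _ : Fin v) => (1:F))) * (Matrix.of (fun (_ _ : Fin v) => (1:F)))
      = (v:F) • (Matrix.of (fun (_ _ : Fin v) => (1:F))) := by
    ext i j
    simp [Matrix.mul_apply, Finset.sum_const, Finset.card_univ]
  have hmapA : (Γ.adjMatrix (ZMod p)).map φ = Γ.adjMatrix F := by
    ext i j; simp [apply_ite φ]
  have hmul : ∀ i j, φ ((Γ.adjMatrix (ZMod p) * Γ.adjMatrix (ZMod p)) i j)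
      = (Γ.adjMatrix F * Γ.adjMatrix F) i j := by
    intro i j; rw [← hmapA, ← Matrix.map_mul]; rfl
  constructor
  · rintro ⟨a, c, θ, hc, hθ⟩
    by_cases hE : ∃ i j, Γ.Adj i j
    swap
    · -- empty graph
      push_neg at hE
      have hA0 : Γ.adjMatrix (ZMod p) = 0 := by ext i j; simp [hE i j]
      refine ⟨0, -((v:ZMod p) * (2:ZMod p)⁻¹), 0, ?_, ?_, φ (-((v:ZMod p) * (2:ZMod p)⁻¹)), ?_⟩
      · rw [hA0]; simp
      · field_simp; ring
      · rw [← map_pow]; congr 1; ring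
    by_cases hN : ∃ i j, i ≠ j ∧ ¬ Γ.Adj i j
    swap
    · -- complete graph
      push_neg at hN
      have hAc : Γ.adjMatrix (ZMod p) = Matrix.of (fun (_ _ : Fin v) => (1 : ZMod p)) - 1 := by
        ext i j
        by_cases h : i = j
        · subst h; simp
        · simp [hN i j h, Matrix.one_apply, h]
      have hJJp : (Matrix.of (fun (_ _ : Fin v) => (1 : ZMod p))) * (Matrix.of (fun (_ _ : Fin v) => (1 : ZMod p)))
          = (v : ZMod p) • Matrix.of (fun (_ _ : Fin v) => (1 : ZMod p)) := by
        ext i j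
        simp [Matrix.mul_apply, Finset.sum_const, Finset.card_univ]
      refine ⟨(v:ZMod p) - 1, (v:ZMod p) - 2, (v:ZMod p) * (2:ZMod p)⁻¹,
        ?_, ?_, φ ((v:ZMod p) * (2:ZMod p)⁻¹), ?_⟩
      · rw [hAc]
        simp only [sub_mul, mul_sub, mul_one, one_mul, hJJp]
        match_scalars <;> ring
      · field_simp
        ring
      · rw [← map_pow]; congr 1; field_simp; ring
    -- general case
    obtain ⟨i0, j0, hadj⟩ := hE
    obtain ⟨i1, j1, hne1, hnadj⟩ := hN
    rw [seidel_eq] at hc hθ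
    obtain ⟨b, hb⟩ : ∃ x : F, x = a - 1 := ⟨_, rfl⟩
    rw [← hb] at hc hθ
    obtain ⟨kF, hkF2⟩ : ∃ x : F, 2*x = (v:F) + b - θ := ⟨((v:F) + b - θ)/2, by field_simp⟩
    have hA1 : ∀ i, ∑ x, Γ.adjMatrix F i x = kF := by
      intro i
      have h := congrFun hθ i
      rw [rowsum] at h
      simp only [Fintype.card_fin, Pi.smul_apply, Pi.one_apply, smul_eq_mul, mul_one] at h
      refine mul_left_cancel₀ h2F ?_
      linear_combination -h - hkF2
    have hAJ : Γ.adjMatrix F * (Matrix.of (fun (_ _ : Fin v) => (1:F)))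
        = kF • (Matrix.of (fun (_ _ : Fin v) => (1:F))) := by
      ext i j
      rw [Matrix.mul_apply]
      simp only [of_apply, mul_one, Matrix.smul_apply, smul_eq_mul]
      exact hA1 i
    have hJA : (Matrix.of (fun (_ _ : Fin v) => (1:F))) * Γ.adjMatrix F
        = kF • (Matrix.of (fun (_ _ : Fin v) => (1:F))) := by
      ext i j
      simp only [Matrix.mul_apply, of_apply, one_mul, Matrix.smul_apply, smul_eq_mul, mul_one]
      rw [show ∑ x, Γ.adjMatrix F x j = ∑ x, Γ.adjMatrix F j x from
        Finset.sum_congr rfl fun x _ => by simp [Γ.adj_comm]]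
      exact hA1 j
    obtain ⟨α, hα4⟩ : ∃ x : F, 4*x = c - (v:F) + 4*kF - 2*b :=
      ⟨(c - (v:F) + 4*kF - 2*b)/4, by field_simp⟩
    obtain ⟨β, hβ2⟩ : ∃ x : F, 2*x = 2*b - c := ⟨(2*b - c)/2, by field_simp⟩
    obtain ⟨γ, hγ4⟩ : ∃ x : F, 4*x = c*b - b^2 := ⟨(c*b - b^2)/4, by field_simp⟩
    have hAA : Γ.adjMatrix F * Γ.adjMatrix F
        = α•(Matrix.of (fun (_ _ : Fin v) => (1:F))) + β•Γ.adjMatrix F + γ•1 := by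
      rw [expand1 (Γ.adjMatrix F) (Matrix.of (fun (_ _ : Fin v) => (1:F))) (v:F) kF b hJJF hAJ hJA] at hc
      apply smul_right_injective (Matrix (Fin v) (Fin v) F) h4F
      show (4:F) • (Γ.adjMatrix F * Γ.adjMatrix F) = _
      rw [show (4:F)•(Γ.adjMatrix F * Γ.adjMatrix F)
          = ((v:F) - 4*kF + 2*b)•(Matrix.of (fun (_ _ : Fin v) => (1:F)))
            + (4:F)•(Γ.adjMatrix F * Γ.adjMatrix F) + (-(4*b))•Γ.adjMatrix F
            + (b^2)•(1 : Matrix (Fin v) (Fin v) F)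
          - (((v:F) - 4*kF + 2*b)•(Matrix.of (fun (_ _ : Fin v) => (1:F))) + (-(4*b))•Γ.adjMatrix F
            + (b^2)•1) from by module, hc]
      match_scalars
      · linear_combination -hα4
      · linear_combination -2*hβ2
      · linear_combination -hγ4
    have hent : ∀ i j, φ ((Γ.adjMatrix (ZMod p) * Γ.adjMatrix (ZMod p)) i j)
        = α + β * (if Γ.Adj i j then 1 else 0) + γ * (if i = j then 1 else 0) := by
      intro i j
      rw [hmul, hAA]
      simp only [Matrix.add_apply, Matrix.smul_apply, Matrix.of_apply, Matrix.one_apply,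
        SimpleGraph.adjMatrix_apply, smul_eq_mul, mul_one]
    have hφm : φ ((Γ.adjMatrix (ZMod p) * Γ.adjMatrix (ZMod p)) i1 j1) = α := by
      have h := hent i1 j1; simpa [hnadj, hne1] using h
    have hφl : φ ((Γ.adjMatrix (ZMod p) * Γ.adjMatrix (ZMod p)) i0 j0) = α + β := by
      have h := hent i0 j0; simpa [hadj, hadj.ne] using h
    have hφk : φ ((Γ.adjMatrix (ZMod p) * Γ.adjMatrix (ZMod p)) i0 i0) = α + γ := by
      have h := hent i0 i0; simpa using h
    have hkk : α + γ = kF := by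
      rw [← hφk, hmul, adj_diag]; exact hA1 i0
    refine ⟨(Γ.adjMatrix (ZMod p) * Γ.adjMatrix (ZMod p)) i0 i0,
      (Γ.adjMatrix (ZMod p) * Γ.adjMatrix (ZMod p)) i0 j0,
      (Γ.adjMatrix (ZMod p) * Γ.adjMatrix (ZMod p)) i1 j1, ?_, ?_, b - β, ?_⟩
    · ext i j
      apply hinj
      rw [hent i j]
      simp only [Matrix.add_apply, Matrix.smul_apply, Matrix.of_apply, Matrix.one_apply,
        SimpleGraph.adjMatrix_apply, smul_eq_mul, _root_.map_add, _root_.map_mul,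
        _root_.map_sub, apply_ite φ, _root_.map_one, _root_.map_zero]
      rw [hφm, hφl, hφk]
      split_ifs <;> ring
    · apply hinj
      rw [map_natCast]
      simp only [_root_.map_sub, _root_.map_mul, map_ofNat]
      rw [hφm, hφl, hφk]
      linear_combination hα4 + hβ2 - 4*hkk
    · simp only [_root_.map_add, map_pow, _root_.map_sub, _root_.map_mul, map_ofNat]
      rw [hφm, hφl, hφk]
      linear_combination (-b)*hβ2 - hγ4
  · rintro ⟨k, l, m, hAAp, hvp, δ, hδ⟩
    have hAAF : Γ.adjMatrix F * Γ.adjMatrix F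
        = (φ m)•(Matrix.of (fun (_ _ : Fin v) => (1:F))) + (φ l - φ m)•Γ.adjMatrix F
          + (φ k - φ m)•(1:Matrix (Fin v) (Fin v) F) := by
      ext i j
      rw [← hmul, hAAp]
      simp only [Matrix.add_apply, Matrix.smul_apply, Matrix.of_apply, Matrix.one_apply,
        SimpleGraph.adjMatrix_apply, smul_eq_mul, _root_.map_add, _root_.map_mul,
        _root_.map_sub, apply_ite φ, _root_.map_one, _root_.map_zero]
      try (split_ifs <;> ring)
    have hA1 : ∀ i, ∑ x, Γ.adjMatrix F i x = φ k := by
      intro i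
      rw [← adj_diag, hAAF]
      simp only [Matrix.add_apply, Matrix.smul_apply, Matrix.of_apply, Matrix.one_apply,
        SimpleGraph.adjMatrix_apply, smul_eq_mul]
      simp
      try ring
    have hAJ : Γ.adjMatrix F * (Matrix.of (fun (_ _ : Fin v) => (1:F)))
        = (φ k) • (Matrix.of (fun (_ _ : Fin v) => (1:F))) := by
      ext i j
      rw [Matrix.mul_apply]
      simp only [of_apply, mul_one, Matrix.smul_apply, smul_eq_mul]
      exact hA1 i
    have hJA : (Matrix.of (fun (_ _ : Fin v) => (1:F))) * Γ.adjMatrix F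
        = (φ k) • (Matrix.of (fun (_ _ : Fin v) => (1:F))) := by
      ext i j
      simp only [Matrix.mul_apply, of_apply, one_mul, Matrix.smul_apply, smul_eq_mul, mul_one]
      rw [show ∑ x, Γ.adjMatrix F x j = ∑ x, Γ.adjMatrix F j x from
        Finset.sum_congr rfl fun x _ => by simp [Γ.adj_comm]]
      exact hA1 j
    have hvF : (v:F) = 4 * φ k - 2 * φ l - 2 * φ m := by
      have h := congrArg φ hvp
      simp only [map_natCast, _root_.map_sub, _root_.map_mul, map_ofNat] at h
      exact h
    have hδF : δ^2 = (φ l - φ m)^2 + 4*(φ k - φ m) := by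
      rw [hδ, _root_.map_add, map_pow, _root_.map_sub, _root_.map_mul, _root_.map_sub,
        map_ofNat]
    refine ⟨((φ l - φ m) + δ) + 1, 2*δ, (v:F) - 2 * φ k + ((φ l - φ m) + δ), ?_, ?_⟩
    · rw [seidel_eq]
      rw [show ((φ l - φ m) + δ) + 1 - 1 = (φ l - φ m) + δ from by ring]
      rw [expand1 (Γ.adjMatrix F) (Matrix.of (fun (_ _ : Fin v) => (1:F))) (v:F) (φ k)
        ((φ l - φ m) + δ) hJJF hAJ hJA, hAAF]
      match_scalars
      · linear_combination hvF
      · ring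
      · linear_combination -hδF
    · rw [seidel_eq]
      rw [show ((φ l - φ m) + δ) + 1 - 1 = (φ l - φ m) + δ from by ring]
      ext i
      rw [rowsum]
      simp only [Fintype.card_fin, Pi.smul_apply, Pi.one_apply, smul_eq_mul, mul_one]
      rw [hA1 i]
end

section
/- Let p be an odd prime, F a finite field of characteristic p with canonical ring homomorphism φ : ZMod p → F, let v ≥ 2, and let Γ be a simple graph on Fin v with Seidel matrix Σ over F. Suppose k, λ, μ ∈ ZMod p are such that the adjacency matrix A of Γ over ZMod p satisfies A² = μ·J + (λ−μ)·A + (k−μ)·I and (v : ZMod p) = 4k − 2λ − 2μ, and that δ ∈ F satisfies δ² = φ((λ−μ)² + 4(k−μ)). Then for a, c ∈ F, the equation (Σ + a·I)² = c·(Σ + a·I) holds if and only if there exists ε ∈ {1, −1} with a = φ(λ − μ + 1) + ε·δ and c = 2ε·δ. -/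
open Matrix

lemma seidel_key {v : ℕ} (R : Type*) [CommRing R] (Γ : SimpleGraph (Fin v)) [DecidableRel Γ.Adj]
    (k l m : R)
    (hA : Γ.adjMatrix R * Γ.adjMatrix R =
      m • Matrix.of (fun _ _ => (1 : R)) + (l - m) • Γ.adjMatrix R + (k - m) • 1)
    (hv' : (v : R) = 4 * k - 2 * l - 2 * m) :
    seidel R Γ * seidel R Γ + (2 * (l - m + 1)) • seidel R Γ
      = ((l - m) ^ 2 + 4 * (k - m) - (l - m + 1) ^ 2) • 1 := by
  have hdeg : ∀ i, ((Γ.degree i : R)) = k := by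
    intro i
    have h := congrFun (congrFun hA i) i
    rw [SimpleGraph.adjMatrix_mul_self_apply_self] at h
    simpa using h
  have hAJ : Γ.adjMatrix R * Matrix.of (fun _ _ => (1 : R)) =
      k • Matrix.of (fun _ _ => (1 : R)) := by
    ext i j
    simp only [SimpleGraph.adjMatrix_mul_apply, of_apply, Matrix.smul_apply, smul_eq_mul, mul_one,
      Finset.sum_const, nsmul_eq_mul]
    rw [SimpleGraph.card_neighborFinset_eq_degree, hdeg]
  have hJA : Matrix.of (fun _ _ => (1 : R)) * Γ.adjMatrix R =
      k • Matrix.of (fun _ _ => (1 : R)) := by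
    ext i j
    simp only [SimpleGraph.mul_adjMatrix_apply, of_apply, Matrix.smul_apply, smul_eq_mul, mul_one,
      Finset.sum_const, nsmul_eq_mul]
    rw [SimpleGraph.card_neighborFinset_eq_degree, hdeg]
  have hJJ : (Matrix.of (fun _ _ => (1 : R)) : Matrix (Fin v) (Fin v) R) *
      Matrix.of (fun _ _ => (1 : R)) = (4 * k - 2 * l - 2 * m) • Matrix.of (fun _ _ => (1 : R)) := by
    rw [← hv']
    ext i j
    simp [mul_apply]
  rw [show seidel R Γ = Matrix.of (fun _ _ => (1 : R)) - 2 • Γ.adjMatrix R - 1 from rfl]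
  simp only [sub_mul, mul_sub, smul_mul_assoc, mul_smul_comm, one_mul, mul_one,
    hA, hAJ, hJA, hJJ]
  module

lemma seidel_map {v : ℕ} {R S : Type*} [Ring R] [Ring S] (f : R →+* S)
    (Γ : SimpleGraph (Fin v)) [DecidableRel Γ.Adj] :
    (seidel R Γ).map f = seidel S Γ := by
  ext i j
  simp only [seidel, two_smul, Matrix.map_apply, Matrix.sub_apply, Matrix.add_apply, of_apply, one_apply,
    SimpleGraph.adjMatrix_apply]
  split_ifs <;> simp

lemma map_smul'' {n : Type*} [Fintype n] {R S : Type*} [Ring R] [Ring S] (f : R →+* S)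
    (r : R) (M : Matrix n n R) : (r • M).map f = f r • M.map f := by
  ext i j
  simp [Matrix.map_apply]

/-- Given a `(v,k,λ,μ)`-SRG_p with `v ≡ 4k - 2λ - 2μ (mod p)` and `δ² = (λ-μ)² + 4(k-μ)`
in `F`, the Seidel matrix satisfies `(Σ + aI)² = c(Σ + aI)` iff `a = λ - μ + 1 + εδ` and
`c = 2εδ` for some sign `ε = ±1`. -/
theorem stmt_12 (p : ℕ) (hp : p.Prime) (hodd : Odd p)
    (F : Type) [Field F] [Fintype F] [CharP F p] (φ : ZMod p →+* F)
    (v : ℕ) (hv : 2 ≤ v) (Γ : SimpleGraph (Fin v)) [DecidableRel Γ.Adj]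
    (k l m : ZMod p)
    (hA : Γ.adjMatrix (ZMod p) * Γ.adjMatrix (ZMod p) =
      m • Matrix.of (fun _ _ => (1 : ZMod p)) + (l - m) • Γ.adjMatrix (ZMod p)
        + (k - m) • (1 : Matrix (Fin v) (Fin v) (ZMod p)))
    (hv' : (v : ZMod p) = 4 * k - 2 * l - 2 * m)
    (δ : F) (hδ : δ ^ 2 = φ ((l - m) ^ 2 + 4 * (k - m)))
    (a c : F) :
    (seidel F Γ + a • 1) * (seidel F Γ + a • 1) = c • (seidel F Γ + a • 1) ↔
    ∃ ε : F, (ε = 1 ∨ ε = -1) ∧ a = φ (l - m + 1) + ε * δ ∧ c = 2 * ε * δ := by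
  set t : F := φ (l - m + 1) with ht
  set T : Matrix (Fin v) (Fin v) F := seidel F Γ with hT
  -- key identity over F
  have keyF : T * T + (2 * t) • T = (δ ^ 2 - t ^ 2) • 1 := by
    have h := congrArg (fun M : Matrix (Fin v) (Fin v) (ZMod p) => M.map φ)
      (seidel_key (ZMod p) Γ k l m hA hv')
    simp only [Matrix.map_add ⇑φ (map_add φ), Matrix.map_mul, map_smul'', seidel_map,
      Matrix.map_one ⇑φ (map_zero φ) (map_one φ)] at h
    rw [hT, ht]
    have h2 : φ (2 * (l - m + 1)) = 2 * φ (l - m + 1) := by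
      rw [_root_.map_mul, map_ofNat]
    have h3 : φ ((l - m) ^ 2 + 4 * (k - m) - (l - m + 1) ^ 2)
        = δ ^ 2 - φ (l - m + 1) ^ 2 := by
      rw [map_sub, ← hδ, map_pow]
    rw [← h2, ← h3]
    exact h
  -- linear independence of T and 1
  have i0 : Fin v := ⟨0, by omega⟩
  have hind : ∀ x y : F, x • T + y • (1 : Matrix (Fin v) (Fin v) F) = 0 → x = 0 ∧ y = 0 := by
    intro x y h
    have hne : (⟨0, by omega⟩ : Fin v) ≠ ⟨1, by omega⟩ := by simp [Fin.ext_iff]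
    have h01 := congrFun (congrFun h ⟨0, by omega⟩) ⟨1, by omega⟩
    have h00 := congrFun (congrFun h ⟨0, by omega⟩) ⟨0, by omega⟩
    simp only [Matrix.add_apply, Matrix.smul_apply, Matrix.one_apply_ne hne, Matrix.one_apply_eq,
      Matrix.zero_apply, smul_eq_mul, mul_zero, add_zero, mul_one] at h01 h00
    have hdiag : T (⟨0, by omega⟩ : Fin v) ⟨0, by omega⟩ = 0 := by
      simp [hT, seidel, two_smul]
    have hoff : T (⟨0, by omega⟩ : Fin v) ⟨1, by omega⟩ = 1 ∨
        T (⟨0, by omega⟩ : Fin v) ⟨1, by omega⟩ = -1 := by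
      simp only [hT, seidel, two_smul, Matrix.sub_apply, Matrix.add_apply, of_apply, one_apply,
        SimpleGraph.adjMatrix_apply, if_neg hne]
      split_ifs <;> norm_num
    have hx : x = 0 := by
      rcases hoff with h' | h' <;> rw [h'] at h01
      · simpa using h01
      · have := h01
        rw [mul_neg_one] at this
        simpa using neg_eq_zero.mp this
    refine ⟨hx, ?_⟩
    rw [hdiag, mul_zero, zero_add] at h00
    exact h00
  -- expansion
  have keyF' : T * T = (δ ^ 2 - t ^ 2) • (1 : Matrix (Fin v) (Fin v) F) - (2 * t) • T :=
    eq_sub_of_add_eq keyF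
  have expand : (T + a • 1) * (T + a • 1) - c • (T + a • 1)
      = (2 * a - 2 * t - c) • T
        + (δ ^ 2 - t ^ 2 + a ^ 2 - c * a) • (1 : Matrix (Fin v) (Fin v) F) := by
    simp only [add_mul, mul_add, smul_mul_assoc, mul_smul_comm, one_mul, mul_one, smul_add,
      keyF']
    module
  have hiff : ((T + a • 1) * (T + a • 1) = c • (T + a • 1)) ↔
      (2 * a - 2 * t - c = 0 ∧ δ ^ 2 - t ^ 2 + a ^ 2 - c * a = 0) := by
    rw [← sub_eq_zero, expand]
    constructor
    · exact hind _ _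
    · rintro ⟨h1, h2⟩
      rw [h1, h2, zero_smul, zero_smul, add_zero]
  rw [hiff]
  constructor
  · rintro ⟨h1, h2⟩
    have hfac : (a - t - δ) * (a - t + δ) = 0 := by linear_combination a * h1 - h2
    rcases mul_eq_zero.mp hfac with h | h
    · exact ⟨1, Or.inl rfl, by linear_combination h, by linear_combination -h1 + 2 * h⟩
    · exact ⟨-1, Or.inr rfl, by linear_combination h, by linear_combination -h1 + 2 * h⟩
  · rintro ⟨ε, (rfl | rfl), ha, hc⟩ <;> subst ha <;> subst hc <;> constructor <;> ring
end

section
/- Let Γ be a nontrivial strongly regular graph on Fin v with parameters (v,k,λ,μ), let r, s ∈ ℤ with r > s, r + s = (λ : ℤ) − μ and r·s = (μ : ℤ) − k, and let f, g ∈ ℕ satisfy f + g = v − 1 and f·r + g·s = −(k : ℤ), with f ≠ g. Let p be an odd prime dividing (v : ℤ) − 4k + 2λ + 2μ. Let Σ ∈ ℤ^{v×v} be the Seidel matrix of Γ and G = Σ + (2r+1)·I ∈ ℤ^{v×v}. Then the reduction Ḡ of G modulo p satisfies Ḡ² = (2r − 2s)·Ḡ, every diagonal entry of Ḡ equals 2r+1,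 and every off-diagonal entry of Ḡ squares to 1 (so Ḡ is the Gram matrix of a (2r+1, 1, 2r−2s)-ETF of n = v vectors in a d-dimensional orthogonal geometry over 𝔽_p, where d = rank_{ZMod p} Ḡ). Moreover: (a) if (r : ZMod p) ≠ (s : ZMod p) and (((v : ℤ) − 2k + 2r) : ZMod p) ≠ 0, then d = g + 1; (b) if (r : ZMod p) ≠ (s : ZMod p) and (((v : ℤ) − 2k + 2r) : ZMod p) = 0, then d = g. -/
open Matrix SimpleGraph Module

section Aux

/-- Idempotent matrices over a field have rank equal to trace. -/
lemma auxLemT {n : ℕ} {K : Type*} [Field K] (M : Matrix (Fin n) (Fin n) K)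
    (h : M * M = M) : (M.rank : K) = M.trace := by
  have hproj : LinearMap.IsProj (LinearMap.range M.mulVecLin) M.mulVecLin := by
    constructor
    · intro x; exact LinearMap.mem_range_self _ x
    · rintro x ⟨y, rfl⟩
      simp only [mulVecLin_apply, mulVec_mulVec, h]
  have := hproj.trace
  rw [LinearMap.trace_eq_matrix_trace K (Pi.basisFun K (Fin n))] at this
  rw [Matrix.rank]
  rw [← this]
  congr 1
  rw [← Matrix.toLin'_apply']
  simp [LinearMap.toMatrix_eq_toMatrix']

/-- Independence mod `p` of integer vectors implies independence over `ℚ`. -/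
lemma auxCore {n : ℕ} {p : ℕ} [Fact p.Prime] {ι : Type*} [Fintype ι] (w : ι → (Fin n → ℤ))
    (h : LinearIndependent (ZMod p) (fun j => fun i => ((w j i : ZMod p)))) :
    LinearIndependent ℚ (fun j => fun i => ((w j i : ℚ))) := by
  rw [Fintype.linearIndependent_iff] at h ⊢
  intro c hc
  by_contra hne
  push_neg at hne
  obtain ⟨j0, hj0⟩ := hne
  set D : ℕ := ∏ j, (c j).den with hD
  have hDpos : 0 < D := Finset.prod_pos (fun j _ => (c j).pos)
  have hint : ∀ j, ∃ e : ℤ, (e : ℚ) = c j * D ∧ (e = 0 ↔ c j = 0) := by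
    intro j
    have hdvd : ((c j).den : ℤ) ∣ (D : ℤ) := by
      exact_mod_cast Int.natCast_dvd_natCast.mpr (Finset.dvd_prod_of_mem _ (Finset.mem_univ j))
    obtain ⟨q, hq⟩ := hdvd
    refine ⟨(c j).num * q, ?_, ?_⟩
    · push_cast
      rw [mul_comm ((c j).num : ℚ)]
      rw [show ((c j).num : ℚ) = c j * (c j).den from by
        rw [mul_comm]; exact_mod_cast (Rat.den_mul_eq_num (c j)).symm ]
      have : ((D:ℤ):ℚ) = ((c j).den : ℚ) * (q:ℚ) := by
        exact_mod_cast congrArg (fun z : ℤ => (z : ℚ)) hq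
      push_cast at this ⊢
      rw [this]; ring
    · have hq0 : q ≠ 0 := by
        rintro rfl
        simp at hq
        omega
      constructor
      · intro he
        rcases mul_eq_zero.mp he with h1 | h1
        · exact Rat.zero_of_num_zero h1
        · exact absurd h1 hq0
      · intro he; simp [Rat.num_eq_zero.mpr he]
  choose e he he0 using hint
  have hsum : ∑ j, e j • w j = 0 := by
    have : ((fun x => ∑ j, (e j : ℚ) • (fun i => (w j i : ℚ)) x)) = fun _ => (0:ℚ) := by
      funext i
      have := congrFun hc i
      simp only [he]
      simp only [Finset.sum_apply, Pi.smul_apply, smul_eq_mul] at this ⊢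
      rw [show ∑ j, c j * (D:ℚ) * (w j i : ℚ) = (∑ j, c j * (w j i:ℚ)) * D from by
        rw [Finset.sum_mul]; congr 1; funext j; ring]
      rw [this]; simp
    funext i
    have := congrFun this i
    simp only [Finset.sum_apply, Pi.smul_apply, smul_eq_mul] at this ⊢
    exact_mod_cast this
  obtain ⟨b, hb, hbgcd⟩ := Finset.extract_gcd e
    (⟨j0, Finset.mem_univ j0⟩ : (Finset.univ : Finset ι).Nonempty)
  set d : ℤ := Finset.univ.gcd e with hd
  have hdne : d ≠ 0 := by
    rw [hd, Ne, Finset.gcd_eq_zero_iff]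
    push_neg
    exact ⟨j0, Finset.mem_univ _, fun hh => hj0 ((he0 j0).mp hh)⟩
  have hsumb : ∑ j, b j • w j = 0 := by
    have : d • (∑ j, b j • w j) = d • (0 : Fin n → ℤ) := by
      rw [smul_zero, Finset.smul_sum, ← hsum]
      congr 1; funext j; rw [hb j (Finset.mem_univ j), mul_smul]
    exact smul_right_injective _ hdne this
  have hmodp : ∀ j, ((b j : ZMod p)) = 0 := by
    apply h
    funext i
    have := congrFun hsumb i
    simp only [Finset.sum_apply, Pi.smul_apply, smul_eq_mul, Pi.zero_apply] at this ⊢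
    exact_mod_cast congrArg (Int.cast : ℤ → ZMod p) this
  have : (p : ℤ) ∣ Finset.univ.gcd b := by
    apply Finset.dvd_gcd
    intro j _
    exact (ZMod.intCast_zmod_eq_zero_iff_dvd _ _).mp (hmodp j)
  rw [hbgcd] at this
  have hp2 := (Fact.out : p.Prime).two_le
  have := Int.le_of_dvd one_pos this
  omega

/-- Reduction mod `p` does not increase the rank of an integer matrix. -/
lemma auxLemR {n : ℕ} (p : ℕ) [Fact p.Prime] (M : Matrix (Fin n) (Fin n) ℤ) :
    (M.map (Int.cast : ℤ → ZMod p)).rank ≤ (M.map (Int.cast : ℤ → ℚ)).rank := by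
  classical
  rw [rank_eq_finrank_span_cols, rank_eq_finrank_span_cols]
  set colP : Fin n → (Fin n → ZMod p) := (M.map (Int.cast : ℤ → ZMod p))ᵀ with hcolP
  set colQ : Fin n → (Fin n → ℚ) := (M.map (Int.cast : ℤ → ℚ))ᵀ with hcolQ
  obtain ⟨t, hts, htspan, htind⟩ := exists_linearIndependent (ZMod p) (Set.range colP)
  have htfin : t.Finite := (Set.finite_range colP).subset hts
  haveI := htfin.fintype
  have hchoice : ∀ x : t, ∃ j : Fin n, colP j = (x : Fin n → ZMod p) := by
    rintro ⟨x, hx⟩; exact hts hx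
  choose ι hι using hchoice
  have hindP : LinearIndependent (ZMod p) (fun x : t => colP (ι x)) := by
    convert htind with x
    rw [hι]
    rfl
  have hindP' : LinearIndependent (ZMod p) (fun x : t => fun i => ((M i (ι x) : ZMod p))) := by
    convert hindP with x
    rfl
  have hindQ : LinearIndependent ℚ (fun x : t => fun i => ((M i (ι x) : ℚ))) :=
    auxCore _ hindP'
  have hindQ' : LinearIndependent ℚ (fun x : t => colQ (ι x)) := by
    convert hindQ with x
    rfl
  calc finrank (ZMod p) (Submodule.span (ZMod p) (Set.range colP))
      = finrank (ZMod p) (Submodule.span (ZMod p) t) := by rw [htspan]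
    _ = t.toFinset.card := finrank_span_set_eq_card htind
    _ = Fintype.card t := by simp
    _ = finrank ℚ (Submodule.span ℚ (Set.range (fun x : t => colQ (ι x)))) :=
        (finrank_span_eq_card hindQ').symm
    _ ≤ finrank ℚ (Submodule.span ℚ (Set.range colQ)) := by
        apply Submodule.finrank_mono
        apply Submodule.span_mono
        rintro _ ⟨x, rfl⟩
        exact ⟨ι x, rfl⟩

lemma auxRankSmulLe {n : ℕ} {K : Type*} [Field K] (a : K) (M : Matrix (Fin n) (Fin n) K) :
    (a • M).rank ≤ M.rank := by
  have h : a • M = (a • (1 : Matrix (Fin n) (Fin n) K)) * M := by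
    rw [Matrix.smul_mul, one_mul]
  rw [h]
  exact Matrix.rank_mul_le_right _ _

lemma auxRankSmulEq {n : ℕ} {K : Type*} [Field K] {a : K} (ha : a ≠ 0)
    (M : Matrix (Fin n) (Fin n) K) : (a • M).rank = M.rank := by
  refine le_antisymm (auxRankSmulLe a M) ?_
  have : M = a⁻¹ • (a • M) := by rw [smul_smul, inv_mul_cancel₀ ha, one_smul]
  conv_lhs => rw [this]
  exact auxRankSmulLe _ _

lemma auxRankAddLe {n : ℕ} {K : Type*} [Field K] (A B : Matrix (Fin n) (Fin n) K) :
    (A + B).rank ≤ A.rank + B.rank := by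
  simp only [Matrix.rank]
  rw [Matrix.mulVecLin_add]
  have hle : LinearMap.range (A.mulVecLin + B.mulVecLin)
      ≤ LinearMap.range A.mulVecLin ⊔ LinearMap.range B.mulVecLin := by
    rintro _ ⟨x, rfl⟩
    exact Submodule.add_mem_sup (LinearMap.mem_range_self _ x) (LinearMap.mem_range_self _ x)
  exact le_trans (Submodule.finrank_mono hle)
    (Submodule.finrank_add_le_finrank_add_finrank _ _)

lemma auxRankSubLe {n : ℕ} {K : Type*} [Field K] (A B : Matrix (Fin n) (Fin n) K) :
    (A - B).rank ≤ A.rank + B.rank := by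
  rw [sub_eq_add_neg]
  refine le_trans (auxRankAddLe A (-B)) ?_
  have : (-B) = (-1 : K) • B := by simp
  rw [this, auxRankSmulEq (by norm_num : (-1:K) ≠ 0)]

-- graph matrix identities
variable {V : Type*} [Fintype V] [DecidableEq V] {α : Type*} [CommRing α]
variable (Γ : SimpleGraph V) [DecidableRel Γ.Adj]

lemma auxJJ : (Matrix.of (fun _ _ => (1:α)) : Matrix V V α) * Matrix.of (fun _ _ => (1:α))
    = (Fintype.card V : α) • Matrix.of (fun _ _ => (1:α)) := by
  ext i j
  rw [Matrix.mul_apply]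
  simp [Finset.card_univ]

omit [DecidableEq V] in
lemma auxAJ {k : ℕ} (h : Γ.IsRegularOfDegree k) :
    Γ.adjMatrix α * Matrix.of (fun _ _ => (1:α)) = (k:α) • Matrix.of (fun _ _ => (1:α)) := by
  ext i j
  rw [SimpleGraph.adjMatrix_mul_apply]
  simp [h i]

omit [DecidableEq V] in
lemma auxJA {k : ℕ} (h : Γ.IsRegularOfDegree k) :
    Matrix.of (fun _ _ => (1:α)) * Γ.adjMatrix α = (k:α) • Matrix.of (fun _ _ => (1:α)) := by
  ext i j
  rw [SimpleGraph.mul_adjMatrix_apply]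
  simp [h j]

lemma auxAA {n k l m : ℕ} (h : Γ.IsSRGWith n k l m) :
    Γ.adjMatrix α * Γ.adjMatrix α = (k:α) • (1 : Matrix V V α) + (l:α) • Γ.adjMatrix α
      + (m:α) • (Matrix.of (fun _ _ => (1:α)) - 1 - Γ.adjMatrix α) := by
  have h2 := h.matrix_eq (α := α)
  rw [← sq]
  rw [h2]
  have hc : (Γᶜ.adjMatrix α) = Matrix.of (fun _ _ => (1:α)) - 1 - Γ.adjMatrix α := by
    ext i j
    by_cases hij : i = j
    · subst hij; simp
    · by_cases ha : Γ.Adj i j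
      · simp [compl_adj, hij, ha, Matrix.one_apply_ne hij]
      · simp [compl_adj, hij, ha, Matrix.one_apply_ne hij]
  rw [hc]
  simp only [← Nat.cast_smul_eq_nsmul α]

-- projection identities over a field
variable {n : ℕ} {K : Type*} [Field K]

lemma auxProjIdem (A J : Matrix (Fin n) (Fin n) K) (k m r s w : K)
    (hAA : A*A = (r+s)•A - (r*s)•(1 : Matrix (Fin n) (Fin n) K) + m•J)
    (hAJ : A*J = k•J) (hJA : J*A = k•J) (hJJ : J*J = w•J) (hw : w ≠ 0) (hrs : r ≠ s)
    (hmu : m * w = (k-r)*(k-s)) :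
    ((s-r)⁻¹ • (A - r•(1 : Matrix (Fin n) (Fin n) K) - (w⁻¹*(k-r))•J)) *
      ((s-r)⁻¹ • (A - r•1 - (w⁻¹*(k-r))•J))
    = (s-r)⁻¹ • (A - r•1 - (w⁻¹*(k-r))•J) := by
  simp only [Matrix.smul_mul, Matrix.mul_smul, sub_mul, mul_sub, Matrix.smul_mul, Matrix.mul_smul,
    one_mul, mul_one, hAA, hAJ, hJA, hJJ]
  have hsr : s - r ≠ 0 := sub_ne_zero.mpr (Ne.symm hrs)
  match_scalars <;> field_simp [hsr] <;>
    first
      | ring1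
      | linear_combination w * (r-s) * hmu
      | linear_combination w * (s-r) * hmu
      | linear_combination (r-s) * hmu
      | linear_combination (s-r) * hmu
      | linear_combination w * hmu
      | linear_combination (-w) * hmu
      | linear_combination hmu
      | linear_combination -hmu

lemma auxProjOneIdem (J : Matrix (Fin n) (Fin n) K) (w : K) (hJJ : J*J = w•J) (hw : w ≠ 0) :
    (w⁻¹ • J) * (w⁻¹ • J) = w⁻¹ • J := by
  simp only [Matrix.smul_mul, Matrix.mul_smul, hJJ]
  match_scalars
  field_simp

end Aux

/-- ETFs with centroidal symmetry from SRGs: if `Γ` is a nontrivial `(v,k,λ,μ)`-SRG with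
restricted eigenvalues `r > s` of multiplicities `f ≠ g`, and `p` is an odd prime dividing
`v - 4k + 2λ + 2μ`, then the reduction mod `p` of `G = Σ + (2r+1)I` is the Gram matrix of a
`(2r+1, 1, 2r-2s)`-ETF of `v` vectors in dimension `d = rank_p G`, with (a) `d = g + 1` if
`r ≢ s` and `v - 2k + 2r ≢ 0 (mod p)`, and (b) `d = g` if `r ≢ s` and `v - 2k + 2r ≡ 0`. -/
theorem stmt_13 (v k l m : ℕ) (Γ : SimpleGraph (Fin v)) [DecidableRel Γ.Adj]
    (hsrg : Γ.IsSRGWith v k l m) (hnc : Γ ≠ ⊤) (hne : Γ ≠ ⊥)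
    (r s : ℤ) (hrs : s < r)
    (hsum : r + s = (l : ℤ) - (m : ℤ)) (hprod : r * s = (m : ℤ) - (k : ℤ))
    (f g : ℕ) (hfg : f + g = v - 1)
    (hmult : (f : ℤ) * r + (g : ℤ) * s = -(k : ℤ)) (hfgne : f ≠ g)
    (p : ℕ) (hp : p.Prime) (hodd : Odd p)
    (hdvd : (p : ℤ) ∣ (v : ℤ) - 4 * (k : ℤ) + 2 * (l : ℤ) + 2 * (m : ℤ)) :
    ((seidel ℤ Γ + (2 * r + 1) • 1).map (Int.cast : ℤ → ZMod p)) *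
        ((seidel ℤ Γ + (2 * r + 1) • 1).map (Int.cast : ℤ → ZMod p))
      = ((2 * r - 2 * s : ℤ) : ZMod p) •
          ((seidel ℤ Γ + (2 * r + 1) • 1).map (Int.cast : ℤ → ZMod p)) ∧
    (∀ i, ((seidel ℤ Γ + (2 * r + 1) • 1).map (Int.cast : ℤ → ZMod p)) i i
      = ((2 * r + 1 : ℤ) : ZMod p)) ∧
    (∀ i j, i ≠ j →
      (((seidel ℤ Γ + (2 * r + 1) • 1).map (Int.cast : ℤ → ZMod p)) i j) ^ 2 = 1) ∧
    ((r : ZMod p) ≠ (s : ZMod p) → (((v : ℤ) - 2 * (k : ℤ) + 2 * r : ℤ) : ZMod p) ≠ 0 →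
      ((seidel ℤ Γ + (2 * r + 1) • 1).map (Int.cast : ℤ → ZMod p)).rank = g + 1) ∧
    ((r : ZMod p) ≠ (s : ZMod p) → (((v : ℤ) - 2 * (k : ℤ) + 2 * r : ℤ) : ZMod p) = 0 →
      ((seidel ℤ Γ + (2 * r + 1) • 1).map (Int.cast : ℤ → ZMod p)).rank = g) := by
  haveI : Fact p.Prime := ⟨hp⟩
  -- basic facts
  have hv1 : 1 ≤ v := by
    by_contra hlt
    push_neg at hlt
    interval_cases v
    exact hne (by ext i j; exact absurd i.2 (by omega))
  have hreg : Γ.IsRegularOfDegree k := hsrg.regular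
  set A : Matrix (Fin v) (Fin v) ℤ := Γ.adjMatrix ℤ with hA
  set Jz : Matrix (Fin v) (Fin v) ℤ := Matrix.of (fun _ _ => (1:ℤ)) with hJz
  set G : Matrix (Fin v) (Fin v) ℤ := seidel ℤ Γ + (2 * r + 1) • 1 with hGdef
  have hG : G = Jz - (2:ℤ)•A + (2*r)•(1 : Matrix (Fin v) (Fin v) ℤ) := by
    ext i j
    simp only [hGdef, hJz, seidel, Matrix.add_apply, Matrix.sub_apply, Matrix.smul_apply,
      Matrix.of_apply, smul_eq_mul]
    simp only [nsmul_eq_mul, Nat.cast_ofNat]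
    ring
  have hcard : Fintype.card (Fin v) = v := Fintype.card_fin v
  have hJJz := auxJJ (V := Fin v) (α := ℤ)
  rw [hcard] at hJJz
  have hAJz := auxAJ (α := ℤ) Γ hreg
  have hJAz := auxJA (α := ℤ) Γ hreg
  have hAAz := auxAA (α := ℤ) Γ hsrg
  have hAA' : A * A = ((r:ℤ)+s)•A - (r*s)•(1 : Matrix (Fin v) (Fin v) ℤ) + (m:ℤ)•Jz := by
    rw [← hA] at hAAz
    rw [hAAz]
    match_scalars <;>
    first
      | ring1
      | linear_combination hsum
      | linear_combination -hsum
      | linear_combination hprod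
      | linear_combination -hprod
      | linear_combination 2*hsum
      | linear_combination -2*hsum
      | linear_combination 2*hprod
      | linear_combination -2*hprod
      | linear_combination 4*hsum
      | linear_combination -4*hsum
      | linear_combination 4*hprod
      | linear_combination -4*hprod
      | linear_combination hprod + 2*hsum
      | linear_combination hprod - 2*hsum
      | linear_combination -hprod + 2*hsum
      | linear_combination -hprod - 2*hsum
      | linear_combination 4*hprod - 4*hsum
      | linear_combination 4*hprod + 4*hsum
      | linear_combination -4*hprod - 4*hsum
      | linear_combination -4*hprod + 4*hsum
      | linear_combination 2*hsum + 4*hprod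
      | linear_combination 2*hsum - 4*hprod
  -- the key integer identity
  have key : G * G = (2*r-2*s)•G + ((v:ℤ) - 4*k + 2*l + 2*m)•Jz := by
    rw [hG]
    rw [← hA, ← hJz] at hAAz hAJz hJAz
    rw [← hJz] at hJJz
    simp only [sub_mul, mul_sub, add_mul, mul_add, Matrix.smul_mul, Matrix.mul_smul,
      one_mul, mul_one, hAAz, hAJz, hJAz, hJJz]
    match_scalars <;>
    first
      | ring1
      | linear_combination hsum
      | linear_combination -hsum
      | linear_combination hprod
      | linear_combination -hprod
      | linear_combination 2*hsum
      | linear_combination -2*hsum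
      | linear_combination 2*hprod
      | linear_combination -2*hprod
      | linear_combination 4*hsum
      | linear_combination -4*hsum
      | linear_combination 4*hprod
      | linear_combination -4*hprod
      | linear_combination hprod + 2*hsum
      | linear_combination hprod - 2*hsum
      | linear_combination -hprod + 2*hsum
      | linear_combination -hprod - 2*hsum
      | linear_combination 4*hprod - 4*hsum
      | linear_combination 4*hprod + 4*hsum
      | linear_combination -4*hprod - 4*hsum
      | linear_combination -4*hprod + 4*hsum
      | linear_combination 2*hsum + 4*hprod
      | linear_combination 2*hsum - 4*hprod
  -- notation for reduced matrix
  set Gm : Matrix (Fin v) (Fin v) (ZMod p) := G.map (Int.cast : ℤ → ZMod p) with hGm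
  have hmapG : ∀ (M N : Matrix (Fin v) (Fin v) ℤ), (M * N).map (Int.cast : ℤ → ZMod p)
      = M.map (Int.cast : ℤ → ZMod p) * N.map (Int.cast : ℤ → ZMod p) := by
    intro M N
    ext i j
    simp [Matrix.mul_apply, Matrix.map_apply]
  set N : ℤ := (v:ℤ) - 4*k + 2*l + 2*m with hNdef
  have hNzero : ((N : ℤ) : ZMod p) = 0 :=
    (ZMod.intCast_zmod_eq_zero_iff_dvd _ p).mpr hdvd
  -- Part 1
  have part1 : Gm * Gm = ((2 * r - 2 * s : ℤ) : ZMod p) • Gm := by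
    rw [hGm, ← hmapG]
    rw [key]
    ext i j
    simp only [Matrix.map_apply, Matrix.add_apply, Matrix.smul_apply, smul_eq_mul]
    push_cast
    rw [hNzero]
    ring
  -- Part 2
  have hGdiag : ∀ i, G i i = 2*r + 1 := by
    intro i
    rw [hG]
    simp only [Matrix.add_apply, Matrix.sub_apply, Matrix.smul_apply, Matrix.of_apply, hJz,
      smul_eq_mul, Matrix.one_apply_eq, SimpleGraph.adjMatrix_apply]
    have h0 : A i i = 0 := by simp [hA]
    rw [h0]; ring
  have part2 : ∀ i, Gm i i = ((2 * r + 1 : ℤ) : ZMod p) := by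
    intro i
    simp [hGm, Matrix.map_apply, hGdiag i]
  -- Part 3
  have part3 : ∀ i j, i ≠ j → (Gm i j)^2 = 1 := by
    intro i j hij
    have : G i j = 1 ∨ G i j = -1 := by
      rw [hG]
      simp only [Matrix.add_apply, Matrix.sub_apply, Matrix.smul_apply, Matrix.of_apply, hJz,
        smul_eq_mul, Matrix.one_apply_ne hij, SimpleGraph.adjMatrix_apply]
      by_cases ha : Γ.Adj i j
      · right
        have h1 : A i j = 1 := by simp [hA, ha]
        rw [h1]; ring
      · left
        have h1 : A i j = 0 := by simp [hA, ha]
        rw [h1]; ring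
    rcases this with h1 | h1 <;> simp [hGm, Matrix.map_apply, h1]
  -- ℚ-side projection matrices
  set AQ : Matrix (Fin v) (Fin v) ℚ := Γ.adjMatrix ℚ with hAQ
  set JQ : Matrix (Fin v) (Fin v) ℚ := Matrix.of (fun _ _ => (1:ℚ)) with hJQ
  set GQ : Matrix (Fin v) (Fin v) ℚ := G.map (Int.cast : ℤ → ℚ) with hGQdef
  have hJJq := auxJJ (V := Fin v) (α := ℚ)
  rw [hcard] at hJJq
  have hAJq := auxAJ (α := ℚ) Γ hreg
  have hJAq := auxJA (α := ℚ) Γ hreg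
  have hAAq := auxAA (α := ℚ) Γ hsrg
  rw [← hAQ, ← hJQ] at hAJq hJAq hAAq
  rw [← hJQ] at hJJq
  have hsumq : (r:ℚ) + s = (l:ℚ) - m := by exact_mod_cast hsum
  have hprodq : (r:ℚ) * s = (m:ℚ) - k := by exact_mod_cast hprod
  have hmultq : (f:ℚ) * r + (g:ℚ) * s = -(k:ℚ) := by exact_mod_cast hmult
  have hvfgn : v = f + g + 1 := by omega
  have hvq0 : (v:ℚ) ≠ 0 := by positivity
  have hrsne : r ≠ s := ne_of_gt hrs
  have hrsq : (r:ℚ) ≠ (s:ℚ) := by exact_mod_cast hrsne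
  have hAAq' : AQ * AQ = ((r:ℚ)+s)•AQ - ((r:ℚ)*s)•(1 : Matrix (Fin v) (Fin v) ℚ)
      + (m:ℚ)•JQ := by
    rw [hAAq]
    match_scalars <;>
    first
      | ring1
      | linear_combination hsumq
      | linear_combination -hsumq
      | linear_combination hprodq
      | linear_combination -hprodq
      | linear_combination hprodq + 2*hsumq
      | linear_combination hprodq - 2*hsumq
      | linear_combination -hprodq + 2*hsumq
      | linear_combination -hprodq - 2*hsumq
  have hAAq'' : AQ * AQ = ((s:ℚ)+r)•AQ - ((s:ℚ)*r)•(1 : Matrix (Fin v) (Fin v) ℚ)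
      + (m:ℚ)•JQ := by
    rw [hAAq']
    match_scalars <;> ring
  -- the parameter identity  m * v = (k-r)(k-s)
  have hXYq : (AQ - (r:ℚ)•1) * (AQ - (s:ℚ)•1) = (m:ℚ)•JQ := by
    simp only [sub_mul, mul_sub, Matrix.smul_mul, Matrix.mul_smul, one_mul, mul_one, hAAq']
    match_scalars <;> ring
  have hmuq : (m:ℚ) * v = ((k:ℚ)-r)*((k:ℚ)-s) := by
    have h1 : (AQ - (r:ℚ)•1) * ((AQ - (s:ℚ)•1) * JQ) = ((m:ℚ)*v)•JQ := by
      rw [← mul_assoc, hXYq, Matrix.smul_mul, hJJq, smul_smul]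
    have hYJ : (AQ - (s:ℚ)•1) * JQ = ((k:ℚ)-s)•JQ := by
      rw [sub_mul, hAJq, Matrix.smul_mul, one_mul, ← sub_smul]
    have hXJ : (AQ - (r:ℚ)•1) * JQ = ((k:ℚ)-r)•JQ := by
      rw [sub_mul, hAJq, Matrix.smul_mul, one_mul, ← sub_smul]
    have h2 : (AQ - (r:ℚ)•1) * ((AQ - (s:ℚ)•1) * JQ)
        = (((k:ℚ)-r)*((k:ℚ)-s))•JQ := by
      rw [hYJ, Matrix.mul_smul, hXJ, smul_smul]
      rw [mul_comm]
    have i0 : Fin v := ⟨0, hv1⟩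
    have := congrFun (congrFun (h1.symm.trans h2) i0) i0
    simpa [hJQ, Matrix.smul_apply] using this
  -- projectors
  set Ps : Matrix (Fin v) (Fin v) ℚ :=
    ((s:ℚ)-r)⁻¹ • (AQ - (r:ℚ)•1 - ((v:ℚ)⁻¹*((k:ℚ)-r))•JQ) with hPsdef
  set Pr : Matrix (Fin v) (Fin v) ℚ :=
    ((r:ℚ)-s)⁻¹ • (AQ - (s:ℚ)•1 - ((v:ℚ)⁻¹*((k:ℚ)-s))•JQ) with hPrdef
  set P1 : Matrix (Fin v) (Fin v) ℚ := (v:ℚ)⁻¹ • JQ with hP1def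
  have hPs : Ps * Ps = Ps :=
    auxProjIdem AQ JQ (k:ℚ) (m:ℚ) (r:ℚ) (s:ℚ) (v:ℚ) hAAq' hAJq hJAq hJJq hvq0 hrsq hmuq
  have hPr : Pr * Pr = Pr :=
    auxProjIdem AQ JQ (k:ℚ) (m:ℚ) (s:ℚ) (r:ℚ) (v:ℚ) hAAq'' hAJq hJAq hJJq hvq0 hrsq.symm
      (by linear_combination hmuq)
  have hP1 : P1 * P1 = P1 := auxProjOneIdem JQ (v:ℚ) hJJq hvq0
  -- traces
  have htrAQ : AQ.trace = 0 := by rw [hAQ]; exact SimpleGraph.trace_adjMatrix ℚ Γ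
  have htrJQ : JQ.trace = (v:ℚ) := by
    simp [hJQ, Matrix.trace, Matrix.diag]
  have htr1 : (1 : Matrix (Fin v) (Fin v) ℚ).trace = (v:ℚ) := by
    rw [Matrix.trace_one, hcard]
  have hvzq : (v:ℚ) = (f:ℚ) + g + 1 := by exact_mod_cast congrArg (Nat.cast : ℕ → ℚ) hvfgn
  have htrPs : Ps.trace = (g:ℚ) := by
    rw [hPsdef]
    rw [Matrix.trace_smul, Matrix.trace_sub, Matrix.trace_sub, Matrix.trace_smul,
      Matrix.trace_smul, htrAQ, htrJQ, htr1]
    rw [smul_eq_mul, smul_eq_mul, smul_eq_mul]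
    have hsr : (s:ℚ) - r ≠ 0 := sub_ne_zero.mpr (Ne.symm hrsq)
    field_simp [hsr]
    first
      | linear_combination hmultq + (r:ℚ)*hvzq
      | linear_combination hmultq - (r:ℚ)*hvzq
      | linear_combination -hmultq + (r:ℚ)*hvzq
      | linear_combination -hmultq - (r:ℚ)*hvzq
  have htrPr : Pr.trace = (f:ℚ) := by
    rw [hPrdef]
    rw [Matrix.trace_smul, Matrix.trace_sub, Matrix.trace_sub, Matrix.trace_smul,
      Matrix.trace_smul, htrAQ, htrJQ, htr1]
    rw [smul_eq_mul, smul_eq_mul, smul_eq_mul]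
    have hsr : (r:ℚ) - s ≠ 0 := sub_ne_zero.mpr hrsq
    field_simp [hsr]
    first
      | linear_combination hmultq + (s:ℚ)*hvzq
      | linear_combination hmultq - (s:ℚ)*hvzq
      | linear_combination -hmultq + (s:ℚ)*hvzq
      | linear_combination -hmultq - (s:ℚ)*hvzq
  have htrP1 : P1.trace = 1 := by
    rw [hP1def, Matrix.trace_smul, htrJQ, smul_eq_mul]
    field_simp
  -- ranks of projectors
  have hrkPs : Ps.rank = g := by
    have := auxLemT Ps hPs
    rw [htrPs] at this
    exact_mod_cast this
  have hrkPr : Pr.rank = f := by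
    have := auxLemT Pr hPr
    rw [htrPr] at this
    exact_mod_cast this
  have hrkP1 : P1.rank = 1 := by
    have := auxLemT P1 hP1
    rw [htrP1] at this
    exact_mod_cast this
  -- rational form of G
  have hAcast : ∀ i j, ((A i j : ℤ) : ℚ) = AQ i j := by
    intro i j
    by_cases ha : Γ.Adj i j <;> simp [hA, hAQ, ha]
  have hOneCastQ : ∀ i j, (((1 : Matrix (Fin v) (Fin v) ℤ) i j : ℤ) : ℚ)
      = (1 : Matrix (Fin v) (Fin v) ℚ) i j := by
    intro i j
    by_cases h : i = j <;> simp [Matrix.one_apply, h]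
  have hGQ : GQ = JQ - (2:ℚ)•AQ + (2*(r:ℚ))•(1 : Matrix (Fin v) (Fin v) ℚ) := by
    ext i j
    rw [hGQdef, Matrix.map_apply, hG]
    simp only [Matrix.add_apply, Matrix.sub_apply, Matrix.smul_apply, Matrix.of_apply,
      hJz, hJQ, smul_eq_mul]
    push_cast
    rw [hAcast, hOneCastQ]
  -- decompositions
  have hdec1 : GQ = (2*(r:ℚ)-2*s) • Ps + ((v:ℚ)-2*k+2*r) • P1 := by
    rw [hGQ, hPsdef, hP1def]
    have hsr : (s:ℚ) - r ≠ 0 := sub_ne_zero.mpr (Ne.symm hrsq)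
    match_scalars <;> field_simp [hsr] <;> ring
  have hdec2 : GQ - (2*(r:ℚ)-2*s) • (1 : Matrix (Fin v) (Fin v) ℚ)
      = (-(2*(r:ℚ)-2*s)) • Pr + ((v:ℚ)-2*k+2*s) • P1 := by
    rw [hGQ, hPrdef, hP1def]
    have hsr : (r:ℚ) - s ≠ 0 := sub_ne_zero.mpr hrsq
    match_scalars <;> field_simp [hsr] <;> ring
  -- rational rank bounds
  have hrkGQ : GQ.rank ≤ g + 1 := by
    rw [hdec1]
    refine le_trans (auxRankAddLe _ _) ?_
    refine add_le_add (le_trans (auxRankSmulLe _ _) (le_of_eq hrkPs))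
      (le_trans (auxRankSmulLe _ _) (le_of_eq hrkP1))
  have hrkGQ2 : (GQ - (2*(r:ℚ)-2*s) • (1 : Matrix (Fin v) (Fin v) ℚ)).rank ≤ f + 1 := by
    rw [hdec2]
    refine le_trans (auxRankAddLe _ _) ?_
    refine add_le_add (le_trans (auxRankSmulLe _ _) (le_of_eq hrkPr))
      (le_trans (auxRankSmulLe _ _) (le_of_eq hrkP1))
  -- transfer to ZMod p
  have hub : Gm.rank ≤ g + 1 := le_trans (auxLemR p G) (by rw [← hGQdef]; exact hrkGQ)
  set cF : ZMod p := ((2 * r - 2 * s : ℤ) : ZMod p) with hcF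
  set G2 : Matrix (Fin v) (Fin v) ℤ := G - (2*r-2*s) • 1 with hG2
  have hOneCastF : ∀ i j, (((1 : Matrix (Fin v) (Fin v) ℤ) i j : ℤ) : ZMod p)
      = (1 : Matrix (Fin v) (Fin v) (ZMod p)) i j := by
    intro i j
    by_cases h : i = j <;> simp [Matrix.one_apply, h]
  have hOneCastQ2 : ∀ i j, (((1 : Matrix (Fin v) (Fin v) ℤ) i j : ℤ) : ℚ)
      = (1 : Matrix (Fin v) (Fin v) ℚ) i j := hOneCastQ
  have hG2m : Gm - cF • (1 : Matrix (Fin v) (Fin v) (ZMod p)) = G2.map (Int.cast : ℤ → ZMod p) := by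
    ext i j
    rw [hG2]
    simp only [Matrix.map_apply, Matrix.sub_apply, Matrix.smul_apply, hGm, smul_eq_mul, hcF]
    push_cast
    rw [hOneCastF]
  have hG2Q : G2.map (Int.cast : ℤ → ℚ)
      = GQ - (2*(r:ℚ)-2*s) • (1 : Matrix (Fin v) (Fin v) ℚ) := by
    ext i j
    rw [hG2]
    simp only [Matrix.map_apply, Matrix.sub_apply, Matrix.smul_apply, hGQdef, smul_eq_mul]
    push_cast
    rw [hOneCastQ]
  have hub2 : (Gm - cF • (1 : Matrix (Fin v) (Fin v) (ZMod p))).rank ≤ f + 1 := by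
    rw [hG2m]
    refine le_trans (auxLemR p G2) ?_
    rw [hG2Q]
    exact hrkGQ2
  -- trace of Gm
  have htrGm : Gm.trace = (((v:ℤ) * (2*r+1) : ℤ) : ZMod p) := by
    rw [Matrix.trace]
    have : ∀ i, Matrix.diag Gm i = ((2 * r + 1 : ℤ) : ZMod p) := fun i => part2 i
    rw [Finset.sum_congr rfl (fun i _ => this i)]
    simp [Finset.card_univ]
    push_cast
    ring
  -- integer trace identity
  have hvz : (v:ℤ) = (f:ℤ) + g + 1 := by exact_mod_cast congrArg (Nat.cast : ℕ → ℤ) hvfgn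
  have hintid : (v:ℤ) * (2*r+1) = (g:ℤ)*(2*r-2*s) + ((v:ℤ) - 2*k + 2*r) := by
    first
      | linear_combination 2*hmult + 2*r*hvz
      | linear_combination 2*hmult - 2*r*hvz
      | linear_combination -2*hmult + 2*r*hvz
      | linear_combination -2*hmult - 2*r*hvz
  -- final case analysis
  refine ⟨part1, part2, part3, ?_, ?_⟩ <;> intro hrsF htF <;>
  · -- c ≠ 0 in F
    have hp2 : p ≠ 2 := by
      rintro rfl
      rw [Nat.odd_iff] at hodd
      omega
    have h2F : (2:ZMod p) ≠ 0 := by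
      intro h2
      have : ((2:ℕ):ZMod p) = 0 := by exact_mod_cast h2
      rw [ZMod.natCast_eq_zero_iff] at this
      exact hp2 ((Nat.prime_dvd_prime_iff_eq hp Nat.prime_two).mp this)
    have hcne : cF ≠ 0 := by
      rw [hcF, show ((2 * r - 2 * s : ℤ) : ZMod p) = 2*((r:ℤ):ZMod p) - 2*((s:ℤ):ZMod p) from by push_cast; ring]
      intro h0
      apply hrsF
      have h3 : (2:ZMod p) * (((r:ℤ):ZMod p) - ((s:ℤ):ZMod p)) = 0 := by linear_combination h0
      rcases mul_eq_zero.mp h3 with h4 | h4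
      · exact absurd h4 h2F
      · exact sub_eq_zero.mp h4
    -- rank sum lower bound
    have hlow : v ≤ Gm.rank + (Gm - cF • (1 : Matrix (Fin v) (Fin v) (ZMod p))).rank := by
      have h1 : cF • (1 : Matrix (Fin v) (Fin v) (ZMod p))
          = Gm - (Gm - cF • (1 : Matrix (Fin v) (Fin v) (ZMod p))) := by
        rw [sub_sub_cancel]
      have h2 : (cF • (1 : Matrix (Fin v) (Fin v) (ZMod p))).rank = v := by
        rw [auxRankSmulEq hcne, Matrix.rank_one, hcard]
      calc v = (cF • (1 : Matrix (Fin v) (Fin v) (ZMod p))).rank := h2.symm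
        _ = (Gm - (Gm - cF • (1 : Matrix (Fin v) (Fin v) (ZMod p)))).rank := by rw [← h1]
        _ ≤ _ := auxRankSubLe _ _
    have hglow : g ≤ Gm.rank := by omega
    -- trace / idempotent argument
    set E : Matrix (Fin v) (Fin v) (ZMod p) := cF⁻¹ • Gm with hE
    have hEidem : E * E = E := by
      rw [hE, Matrix.smul_mul, Matrix.mul_smul, part1, smul_smul, smul_smul]
      congr 1
      field_simp
    have htrE := auxLemT E hEidem
    have hrkE : E.rank = Gm.rank := auxRankSmulEq (inv_ne_zero hcne) _
    have htrE2 : E.trace = cF⁻¹ * Gm.trace := by rw [hE, Matrix.trace_smul, smul_eq_mul]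
    have hmain : (Gm.rank : ZMod p) * cF = (g:ZMod p)*cF + (((v:ℤ) - 2*k + 2*r : ℤ) : ZMod p) := by
      have h5 : (Gm.rank : ZMod p) = cF⁻¹ * Gm.trace := by rw [← hrkE, htrE, htrE2]
      have h6 : (Gm.rank : ZMod p) * cF = Gm.trace := by
        rw [h5]
        field_simp
      rw [h6, htrGm, hintid]
      push_cast
      rw [hcF]
      push_cast
      ring
    -- conclude
    rcases (by omega : Gm.rank = g ∨ Gm.rank = g + 1) with hr | hr <;>
    first
      | exact hr
      | (exfalso
         rw [hr] at hmain
         push_cast at hmain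
         first
           | (apply htF
              push_cast
              first
                | linear_combination hmain
                | linear_combination -hmain)
           | (push_cast at htF
              apply hcne
              first
                | linear_combination hmain + htF
                | linear_combination hmain - htF
                | linear_combination -hmain + htF
                | linear_combination -hmain - htF))
end
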